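/- arXiv:1201.0626 — 6 statements merged into one kernel-verified Lean document; each statement's English description precedes it below -/
import Mathlib

section
/- Let Ṽ(a,n) be the clairvoyant value of the Chow–Robbins game from position (a,n). Then for every position (a,n), Ṽ(a,n) ≤ max(a/n, 1/2) + (1/4)·√(π/n). -/
open MeasureTheory ProbabilityTheory Real

/-- `X` is an i.i.d. sequence of fair coin flips taking values in `{0,1}`,
with probability `1/2` of heads (`= 1`). -/
def IsFairCoinSeq {Ω : Type*} [MeasurableSpace Ω] (μ : Measure Ω) (X : ℕ → Ω → ℝ) : Prop :=
  (∀ i, Measurable (X i)) ∧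
  (∀ i ω, X i ω = 0 ∨ X i ω = 1) ∧
  (∀ i, μ {ω | X i ω = 1} = 1/2) ∧
  iIndepFun X μ

/-- `headsProp X a n k ω` is the proportion of heads `R_k` after `k` further flips,
starting from position `(a,n)`: `a` heads out of `n` flips. -/
noncomputable def headsProp {Ω : Type*} (X : ℕ → Ω → ℝ) (a n k : ℕ) (ω : Ω) : ℝ :=
  ((a : ℝ) + ∑ i ∈ Finset.range k, X i ω) / ((n : ℝ) + k)

/-- The clairvoyant value `Ṽ(a,n) = E[sup_k R_k]`. -/
noncomputable def clairvoyantValue {Ω : Type*} [MeasurableSpace Ω] (μ : Measure Ω)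
    (X : ℕ → Ω → ℝ) (a n : ℕ) : ℝ :=
  ∫ ω, (⨆ k : ℕ, headsProp X a n k ω) ∂μ

/-!
Write `S_k` for the number of heads among the next `k` flips. Since
`(a + k/2) / (n + k) ≤ max (a/n) (1/2)`, every `R_k` is at most `max (a/n) (1/2) + G` with
`G = sup_k (S_k - k/2) / (n + k)`, so it suffices to show `E G ≤ √(π/n) / 4`.
The event `t < G` says that the centred walk `S_k - k/2` crosses the line `t n + t k`.
By Hoeffding's lemma the flips are sub-Gaussian, so `exp (8t (S_k - k/2))` normalised by its mean is
a nonnegative martingale that exceeds `exp (8 t² n)` at such a crossing; Doob's maximal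
inequality bounds the probability of a crossing by `exp (-8 t² n)`, and integrating this Gaussian
tail gives `E G ≤ √(π / (8n)) / 2 ≤ √(π/n) / 4`.
-/

open Finset Filter
open scoped ENNReal NNReal

section

variable {Ω : Type*} {mΩ : MeasurableSpace Ω} {μ : Measure Ω}

theorem ProbabilityTheory.iIndepFun.martingale_prod_range_succ {ξ : ℕ → Ω → ℝ}
    (hind : iIndepFun ξ μ) (hξ : ∀ i, StronglyMeasurable (ξ i))
    (hint : ∀ i, Integrable (ξ i) μ) (hmean : ∀ i, μ[ξ i] = 1) :
    Martingale (fun k ↦ ∏ i ∈ range (k + 1), ξ i) (Filtration.natural ξ hξ) μ := by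
  have := hind.isProbabilityMeasure
  have hsucc : ∀ k, ∏ i ∈ range (k + 1 + 1), ξ i = (∏ i ∈ range (k + 1), ξ i) * ξ (k + 1) :=
    fun k ↦ prod_range_succ _ _
  have hindep : ∀ k, IndepFun (∏ i ∈ range (k + 1), ξ i) (ξ (k + 1)) μ := fun k ↦
    hind.indepFun_finsetProd_of_notMem (fun i ↦ (hξ i).measurable) notMem_range_self
  have hprod_int : ∀ k, Integrable (∏ i ∈ range (k + 1), ξ i) μ := by
    intro k
    induction k with
    | zero => simpa using hint 0
    | succ k ih => rw [hsucc]; exact (hindep k).integrable_mul ih (hint _)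
  have hadapted : StronglyAdapted (Filtration.natural ξ hξ) fun k ↦ ∏ i ∈ range (k + 1), ξ i :=
    fun k ↦ Finset.stronglyMeasurable_prod _ fun i hi ↦
      ((Filtration.stronglyAdapted_natural hξ) i).mono
        ((Filtration.natural ξ hξ).mono (Nat.lt_succ_iff.mp (mem_range.mp hi)))
  refine martingale_nat hadapted hprod_int fun k ↦ ?_
  rw [hsucc]
  have hpull := condExp_mul_of_stronglyMeasurable_left (m := Filtration.natural ξ hξ k)
    (hadapted k) (by rw [← hsucc]; exact hprod_int (k + 1)) (hint (k + 1))
  have hcond := hind.condExp_natural_ae_eq_of_lt hξ (Nat.lt_succ_self k)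
  filter_upwards [hpull, hcond] with ω h1 h2
  simp [h1, h2, hmean]

theorem MeasureTheory.Martingale.measure_exists_le_le [IsFiniteMeasure μ] {ℱ : Filtration ℕ mΩ}
    {f : ℕ → Ω → ℝ} (hf : Martingale f ℱ μ) (hnonneg : 0 ≤ f) {ε : ℝ} (hε : 0 < ε) :
    μ {ω | ∃ k, ε ≤ f k ω} ≤ ENNReal.ofReal (μ[f 0] / ε) := by
  set A : ℕ → Set Ω := fun N ↦ {ω | ε ≤ (range (N + 1)).sup' nonempty_range_add_one (f · ω)}
  have hA : ∀ N, A N = {ω | ∃ k ≤ N, ε ≤ f k ω} := fun N ↦ by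
    ext ω; simp [A, le_sup'_iff]
  have hmono : Monotone A := fun M N hMN ω hω ↦ by
    rw [hA] at hω ⊢; obtain ⟨k, hk, h⟩ := hω; exact ⟨k, hk.trans hMN, h⟩
  have hunion : {ω | ∃ k, ε ≤ f k ω} = ⋃ N, A N := by
    ext ω
    simp only [Set.mem_iUnion, hA, Set.mem_ofPred_eq]
    exact ⟨fun ⟨k, h⟩ ↦ ⟨k, k, le_rfl, h⟩, fun ⟨_, k, _, h⟩ ↦ ⟨k, h⟩⟩
  have hbound : ∀ N, ENNReal.ofReal ε * μ (A N) ≤ ENNReal.ofReal (μ[f 0]) := fun N ↦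
    calc ENNReal.ofReal ε * μ (A N) ≤ ENNReal.ofReal (∫ ω in A N, f N ω ∂μ) := by
          rw [ENNReal.ofReal_eq_coe_nnreal hε.le]
          exact maximal_ineq hf.submartingale hnonneg N
      _ ≤ ENNReal.ofReal (μ[f N]) :=
          ENNReal.ofReal_le_ofReal (setIntegral_le_integral (hf.integrable N)
            (Eventually.of_forall (hnonneg N)))
      _ = ENNReal.ofReal (μ[f 0]) := by
          rw [← setIntegral_univ, ← setIntegral_univ (f := f 0),
            hf.setIntegral_eq (Nat.zero_le N) MeasurableSet.univ]
  rw [hunion, hmono.measure_iUnion, ENNReal.ofReal_div_of_pos hε,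
    ENNReal.le_div_iff_mul_le (by simp [hε]) (by simp), mul_comm, ENNReal.mul_iSup]
  exact iSup_le hbound

theorem measure_exists_add_mul_le_sum_le {Y : ℕ → Ω → ℝ} (hY : ∀ i, Measurable (Y i))
    (hind : iIndepFun Y μ) {c : ℝ≥0} (hsub : ∀ i, HasSubgaussianMGF (Y i) c μ)
    {α β : ℝ} (hα : 0 < α) (hβ : 0 ≤ β) :
    μ {ω | ∃ k : ℕ, α + β * k ≤ ∑ i ∈ range k, Y i ω} ≤
      ENNReal.ofReal (exp (-(2 * α * β / c))) := by
  have := hind.isProbabilityMeasure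
  set t : ℝ := 2 * β / c with ht
  have ht0 : 0 ≤ t := by positivity
  set ξ : ℕ → Ω → ℝ := fun i ω ↦ exp (t * Y i ω) / mgf (Y i) μ t with hξ_def
  have hmgf_pos : ∀ i, 0 < mgf (Y i) μ t := fun i ↦ mgf_pos ((hsub i).integrable_exp_mul t)
  have hξ : ∀ i, StronglyMeasurable (ξ i) := fun i ↦
    (((hY i).const_mul t).exp.div_const _).stronglyMeasurable
  have hξ_ind : iIndepFun ξ μ :=
    hind.comp (fun i x ↦ exp (t * x) / mgf (Y i) μ t)
      fun i ↦ (measurable_const.mul measurable_id).exp.div_const _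
  have hξ_int : ∀ i, Integrable (ξ i) μ := fun i ↦
    ((hsub i).integrable_exp_mul t).div_const _
  have hξ_mean : ∀ i, μ[ξ i] = 1 := fun i ↦ by
    rw [hξ_def, integral_div, ← mgf, div_self (hmgf_pos i).ne']
  have hM := hξ_ind.martingale_prod_range_succ hξ hξ_int hξ_mean
  have hM_nonneg : 0 ≤ fun k ↦ ∏ i ∈ range (k + 1), ξ i := fun k ω ↦ by
    change 0 ≤ (∏ i ∈ range (k + 1), ξ i) ω
    rw [prod_apply]
    exact prod_nonneg fun i _ ↦ div_nonneg (exp_pos _).le (hmgf_pos i).le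
  have hcross : ∀ ω k, α + β * k ≤ ∑ i ∈ range k, Y i ω →
      ∃ j, exp (t * α) ≤ (∏ i ∈ range (j + 1), ξ i) ω := by
    intro ω k hk
    obtain ⟨j, rfl⟩ : ∃ j, k = j + 1 := Nat.exists_eq_succ_of_ne_zero (by
      rintro rfl; simp at hk; linarith)
    refine ⟨j, ?_⟩
    have hmgf_le : ∏ i ∈ range (j + 1), mgf (Y i) μ t ≤ exp ((j + 1) * (c * t ^ 2 / 2)) := by
      calc ∏ i ∈ range (j + 1), mgf (Y i) μ t
          ≤ ∏ _i ∈ range (j + 1), exp (c * t ^ 2 / 2) :=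
            prod_le_prod (fun i _ ↦ (hmgf_pos i).le) fun i _ ↦ (hsub i).mgf_le t
        _ = exp ((j + 1) * (c * t ^ 2 / 2)) := by
            rw [prod_const, card_range, ← exp_nat_mul]; push_cast; rfl
    -- the choice of `t` makes the drift `t β` of the exponent cancel the variance term
    have hdrift : (j + 1) * (c * t ^ 2 / 2) = t * (β * (j + 1)) := by
      rw [ht]; field_simp
    have hexponent : t * α ≤ t * ∑ i ∈ range (j + 1), Y i ω - (j + 1) * (c * t ^ 2 / 2) := by
      push_cast at hk
      rw [hdrift]
      linarith [mul_le_mul_of_nonneg_left hk ht0]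
    calc exp (t * α)
        ≤ exp (t * ∑ i ∈ range (j + 1), Y i ω) / exp ((j + 1) * (c * t ^ 2 / 2)) := by
          rw [← exp_sub]; exact exp_le_exp.mpr hexponent
      _ ≤ exp (t * ∑ i ∈ range (j + 1), Y i ω) / ∏ i ∈ range (j + 1), mgf (Y i) μ t :=
          div_le_div_of_nonneg_left (exp_pos _).le (prod_pos fun i _ ↦ hmgf_pos i) hmgf_le
      _ = (∏ i ∈ range (j + 1), ξ i) ω := by
          rw [prod_apply, hξ_def, prod_div_distrib, mul_sum, exp_sum]
  calc μ {ω | ∃ k : ℕ, α + β * k ≤ ∑ i ∈ range k, Y i ω}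
      ≤ μ {ω | ∃ j, exp (t * α) ≤ (∏ i ∈ range (j + 1), ξ i) ω} :=
        measure_mono fun ω ⟨k, hk⟩ ↦ hcross ω k hk
    _ ≤ ENNReal.ofReal (μ[∏ i ∈ range (0 + 1), ξ i] / exp (t * α)) :=
        hM.measure_exists_le_le hM_nonneg (exp_pos _)
    _ = ENNReal.ofReal (exp (-(2 * α * β / c))) := by
        rw [zero_add, prod_range_one, hξ_mean, one_div, ← exp_neg, ht]
        ring_nf

theorem integral_le_of_measureReal_lt_le_exp_neg_sq {G : Ω → ℝ} (hG : Integrable G μ)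
    (hG0 : 0 ≤ᵐ[μ] G) {κ : ℝ} (hκ : 0 < κ)
    (htail : ∀ t > 0, μ.real {ω | t < G ω} ≤ exp (-κ * t ^ 2)) : ∫ ω, G ω ∂μ ≤ √(π / κ) / 2 := by
  rw [hG.integral_eq_integral_meas_lt hG0, ← integral_gaussian_Ioi]
  refine integral_mono_of_nonneg (Eventually.of_forall fun t ↦ measureReal_nonneg)
    (integrable_exp_neg_mul_sq hκ).integrableOn ?_
  exact (ae_restrict_iff' measurableSet_Ioi).mpr (Eventually.of_forall htail)

variable {X : ℕ → Ω → ℝ}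

noncomputable def supExcess (X : ℕ → Ω → ℝ) (n : ℕ) (ω : Ω) : ℝ :=
  ⨆ k : ℕ, (∑ i ∈ range k, (X i ω - 1 / 2)) / (n + k)

theorem excess_le_half (hX : ∀ i ω, X i ω ∈ Set.Icc (0 : ℝ) 1) (n k : ℕ) (ω : Ω) :
    (∑ i ∈ range k, (X i ω - 1 / 2)) / (n + k) ≤ 1 / 2 := by
  refine div_le_of_le_mul₀ (by positivity) (by norm_num) ?_
  have hsum : ∑ i ∈ range k, (X i ω - 1 / 2) ≤ ∑ _i ∈ range k, (1 / 2 : ℝ) :=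
    sum_le_sum fun i _ ↦ by linarith [(hX i ω).2]
  simp only [sum_const, card_range, nsmul_eq_mul] at hsum
  have : (0 : ℝ) ≤ n := n.cast_nonneg
  linarith

theorem supExcess_mem_Icc (hX : ∀ i ω, X i ω ∈ Set.Icc (0 : ℝ) 1) (n : ℕ) (ω : Ω) :
    supExcess X n ω ∈ Set.Icc (0 : ℝ) (1 / 2) :=
  ⟨Real.iSup_nonneg' ⟨0, by simp⟩, ciSup_le (excess_le_half hX n · ω)⟩

theorem measurable_supExcess (hXm : ∀ i, Measurable (X i)) (n : ℕ) :
    Measurable (supExcess X n) :=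
  .iSup fun _ ↦ (Finset.measurable_sum _ fun i _ ↦ (hXm i).sub_const _).div_const _

theorem integrable_supExcess [IsFiniteMeasure μ] (hXm : ∀ i, Measurable (X i))
    (hX : ∀ i ω, X i ω ∈ Set.Icc (0 : ℝ) 1) (n : ℕ) : Integrable (supExcess X n) μ :=
  .of_mem_Icc 0 (1 / 2) (measurable_supExcess hXm n).aemeasurable
    (ae_of_all _ (supExcess_mem_Icc hX n))

theorem measure_lt_supExcess_le (hXm : ∀ i, Measurable (X i))
    (hX : ∀ i ω, X i ω ∈ Set.Icc (0 : ℝ) 1) (hmean : ∀ i, μ[X i] = 1 / 2) (hind : iIndepFun X μ)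
    {n : ℕ} (hn : 0 < n) {t : ℝ} (ht : 0 < t) :
    μ.real {ω | t < supExcess X n ω} ≤ exp (-(8 * n) * t ^ 2) := by
  have := hind.isProbabilityMeasure
  have hsub : ∀ i, HasSubgaussianMGF (fun ω ↦ X i ω - 1 / 2) ((‖(1 : ℝ) - 0‖₊ / 2) ^ 2) μ :=
    fun i ↦ hmean i ▸ hasSubgaussianMGF_of_mem_Icc (hXm i).aemeasurable (ae_of_all _ (hX i))
  have hcross := measure_exists_add_mul_le_sum_le (fun i ↦ (hXm i).sub_const (1 / 2))
    (hind.comp (fun _ x ↦ x - 1 / 2) fun _ ↦ measurable_id.sub_const _) hsub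
    (α := t * n) (β := t) (by positivity) ht.le
  have hsubset : {ω | t < supExcess X n ω} ⊆
      {ω | ∃ k : ℕ, t * n + t * k ≤ ∑ i ∈ range k, (X i ω - 1 / 2)} := by
    intro ω hω
    obtain ⟨k, hk⟩ := (lt_ciSup_iff ⟨1 / 2, Set.forall_mem_range.2 (excess_le_half hX n · ω)⟩).1 hω
    refine ⟨k, ?_⟩
    rw [lt_div_iff₀ (by positivity)] at hk
    linarith
  refine ENNReal.toReal_le_of_le_ofReal (exp_pos _).le
    ((measure_mono hsubset).trans (hcross.trans_eq ?_))
  congr 2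
  norm_num
  ring

theorem integral_supExcess_le (hXm : ∀ i, Measurable (X i))
    (hX : ∀ i ω, X i ω ∈ Set.Icc (0 : ℝ) 1) (hmean : ∀ i, μ[X i] = 1 / 2) (hind : iIndepFun X μ)
    {n : ℕ} (hn : 0 < n) :
    ∫ ω, supExcess X n ω ∂μ ≤ √(π / (8 * n)) / 2 := by
  have := hind.isProbabilityMeasure
  exact integral_le_of_measureReal_lt_le_exp_neg_sq (integrable_supExcess hXm hX n)
    (ae_of_all _ fun ω ↦ (supExcess_mem_Icc hX n ω).1) (by positivity)
    fun t ht ↦ measure_lt_supExcess_le hXm hX hmean hind hn ht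

theorem headsProp_le_max_add_excess {n : ℕ} (hn : 0 < n) (a k : ℕ) (ω : Ω) :
    headsProp X a n k ω ≤
      max ((a : ℝ) / n) (1 / 2) + (∑ i ∈ range k, (X i ω - 1 / 2)) / (n + k) := by
  set C := max ((a : ℝ) / n) (1 / 2)
  have ha : (a : ℝ) ≤ C * n := (div_le_iff₀ (by positivity)).1 (le_max_left _ _)
  have hk : (k : ℝ) / 2 ≤ C * k := by
    nlinarith [le_max_right ((a : ℝ) / n) (1 / 2), (k.cast_nonneg : (0 : ℝ) ≤ k)]
  rw [headsProp, add_comm C, ← sub_le_iff_le_add', ← sub_div, div_le_iff₀ (by positivity),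
    sum_sub_distrib]
  simp only [sum_const, card_range, nsmul_eq_mul]
  linarith

theorem clairvoyantValue_le (hXm : ∀ i, Measurable (X i))
    (hX : ∀ i ω, X i ω ∈ Set.Icc (0 : ℝ) 1) (hmean : ∀ i, μ[X i] = 1 / 2) (hind : iIndepFun X μ)
    {n : ℕ} (hn : 0 < n) (a : ℕ) :
    clairvoyantValue μ X a n ≤ max ((a : ℝ) / n) (1 / 2) + √(π / (8 * n)) / 2 := by
  have := hind.isProbabilityMeasure
  set C := max ((a : ℝ) / n) (1 / 2)
  have hG : Integrable (supExcess X n) μ := integrable_supExcess hXm hX n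
  have hle : ∀ ω, ⨆ k, headsProp X a n k ω ≤ C + supExcess X n ω := fun ω ↦
    ciSup_le fun k ↦ (headsProp_le_max_add_excess hn a k ω).trans <| (add_le_add_iff_left C).2
      (le_ciSup ⟨1 / 2, Set.forall_mem_range.2 (excess_le_half hX n · ω)⟩ k)
  have hnonneg : ∀ ω, 0 ≤ ⨆ k, headsProp X a n k ω := fun ω ↦
    Real.iSup_nonneg fun k ↦ div_nonneg
      (add_nonneg a.cast_nonneg (sum_nonneg fun i _ ↦ (hX i ω).1)) (by positivity)
  have hmeas : Measurable fun ω ↦ ⨆ k, headsProp X a n k ω :=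
    .iSup fun _ ↦ (measurable_const.add (Finset.measurable_sum _ fun i _ ↦ hXm i)).div_const _
  calc clairvoyantValue μ X a n ≤ ∫ ω, (C + supExcess X n ω) ∂μ := by
        refine integral_mono (((integrable_const C).add hG).mono' hmeas.aestronglyMeasurable
          (ae_of_all _ fun ω ↦ ?_)) ((integrable_const C).add hG) hle
        rw [norm_of_nonneg (hnonneg ω)]
        exact hle ω
    _ = C + ∫ ω, supExcess X n ω ∂μ := by rw [integral_add (integrable_const C) hG]; simp
    _ ≤ C + √(π / (8 * n)) / 2 := by gcongr; exact integral_supExcess_le hXm hX hmean hind hn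

theorem IsFairCoinSeq.mem_Icc (hX : IsFairCoinSeq μ X) (i : ℕ) (ω : Ω) :
    X i ω ∈ Set.Icc (0 : ℝ) 1 := by
  rcases hX.2.1 i ω with h | h <;> simp [h]

theorem IsFairCoinSeq.integral_eq_half (hX : IsFairCoinSeq μ X) (i : ℕ) : μ[X i] = 1 / 2 := by
  have hindicator : X i = {ω | X i ω = 1}.indicator 1 := funext fun ω ↦ by
    rcases hX.2.1 i ω with h | h <;> simp [Set.indicator, h]
  have hs : MeasurableSet {ω | X i ω = 1} := hX.1 i (measurableSet_singleton 1)
  rw [hindicator, integral_indicator_one hs, measureReal_def, hX.2.2.1 i]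
  simp

end

theorem clairvoyant_le_add_sqrt_general {Ω : Type*} [MeasurableSpace Ω] (μ : Measure Ω)
    (X : ℕ → Ω → ℝ) (hX : IsFairCoinSeq μ X)
    (a n : ℕ) (hn : 1 ≤ n) :
    clairvoyantValue μ X a n ≤
      max ((a : ℝ) / n) (1 / 2) + (1 / 4) * Real.sqrt (π / n) := by
  refine (clairvoyantValue_le hX.1 hX.mem_Icc hX.integral_eq_half hX.2.2.2 hn a).trans ?_
  have : √(π / (8 * n)) ≤ √(π / n) / 2 := by
    rw [show π / (8 * n) = π / n * (1 / 8) by ring, sqrt_mul (by positivity)]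
    exact mul_le_mul_of_nonneg_left (sqrt_le_iff.2 ⟨by norm_num, by norm_num⟩) (sqrt_nonneg _)
  linarith

/-- For every position `(a,n)`, `Ṽ(a,n) ≤ max(a/n, 1/2) + (1/4)·√(π/n)`. -/
theorem clairvoyant_le_add_sqrt {Ω : Type*} [MeasurableSpace Ω] (μ : Measure Ω)
    [IsProbabilityMeasure μ] (X : ℕ → Ω → ℝ) (hX : IsFairCoinSeq μ X)
    (a n : ℕ) (hn : 1 ≤ n) (han : a ≤ n) :
    clairvoyantValue μ X a n ≤
      max ((a : ℝ) / n) (1 / 2) + (1 / 4) * Real.sqrt (π / n) :=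
  clairvoyant_le_add_sqrt_general μ X hX a n hn
end

section
/- Let (a,n) be a position and let p be a real number with max(a/n, 1/2) < p < 1. Then P(a,n,p) ≤ (2p)^{−(np−a)/(1−p)}. -/
open MeasureTheory ProbabilityTheory Real

/-- `hitProb μ X a n p = P(a,n,p)`, the probability that the proportion of heads
strictly exceeds `p` at some present or future time. -/
noncomputable def hitProb {Ω : Type*} [MeasurableSpace Ω] (μ : Measure Ω)
    (X : ℕ → Ω → ℝ) (a n : ℕ) (p : ℝ) : ℝ :=
  (μ {ω | ∃ k : ℕ, p < headsProp X a n k ω}).toReal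

/-!
Put `B(b, m) = (2p)^(-(m p - b)/(1 - p))`. Gibbs' inequality `p log(2p) + (1-p) log(2(1-p)) ≥ 0`
says `(2p)^(-p/(1-p)) ≤ 2(1-p)`, which makes `B` superharmonic for the walk that moves from
`(b, m)` to `(b + 1, m + 1)` or `(b, m + 1)` with probability `1/2` each; moreover `B(b, m) ≥ 1`
as soon as `b / m > p`. Hence, by induction on `N`, at most `2^N B(b, m)` of the `2^N` flip
patterns of length `N` push the proportion of heads above `p` within `N` flips. Each pattern has
probability `2^(-N)`, and letting `N → ∞` gives `P(a, n, p) ≤ B(a, n)`.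
-/

open Finset

section Bound

variable {p : ℝ}

noncomputable def hitBound (p b m : ℝ) : ℝ := (2 * p) ^ (-((m * p - b) / (1 - p)))

lemma hitBound_nonneg (hp : 0 ≤ p) (b m : ℝ) : 0 ≤ hitBound p b m :=
  rpow_nonneg (by linarith) _

lemma two_mul_rpow_neg_div_le (hp : 1 / 2 < p) (hp1 : p < 1) :
    (2 * p) ^ (-(p / (1 - p))) ≤ 2 * (1 - p) := by
  have hq : 0 < 1 - p := by linarith
  have hlog_p := one_sub_inv_le_log_of_pos (x := 2 * p) (by linarith)
  have hlog_q := one_sub_inv_le_log_of_pos (x := 2 * (1 - p)) (by linarith)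
  have gibbs : 0 ≤ p * log (2 * p) + (1 - p) * log (2 * (1 - p)) := by
    have e1 : p * (1 - (2 * p)⁻¹) = p - 1 / 2 := by field_simp
    have e2 : (1 - p) * (1 - (2 * (1 - p))⁻¹) = (1 - p) - 1 / 2 := by field_simp
    nlinarith [mul_le_mul_of_nonneg_left hlog_p (by linarith : (0 : ℝ) ≤ p),
      mul_le_mul_of_nonneg_left hlog_q hq.le]
  rw [rpow_def_of_pos (by linarith), ← exp_log (by linarith : 0 < 2 * (1 - p)), exp_le_exp,
    show log (2 * p) * -(p / (1 - p)) = -(p * log (2 * p)) / (1 - p) by ring, div_le_iff₀ hq]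
  linarith

lemma hitBound_succ_add_le (hp : 1 / 2 < p) (hp1 : p < 1) (b m : ℝ) :
    hitBound p (b + 1) (m + 1) + hitBound p b (m + 1) ≤ 2 * hitBound p b m := by
  have h2p : 0 < 2 * p := by linarith
  have hq : 1 - p ≠ 0 := by linarith
  have head : hitBound p (b + 1) (m + 1) = hitBound p b m * (2 * p) := by
    rw [hitBound, hitBound, ← rpow_add_one h2p.ne']
    congr 1
    field_simp
    ring
  have tail : hitBound p b (m + 1) = hitBound p b m * (2 * p) ^ (-(p / (1 - p))) := by
    rw [hitBound, hitBound, ← rpow_add h2p]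
    congr 1
    field_simp
    ring
  rw [head, tail]
  linear_combination mul_le_mul_of_nonneg_left (two_mul_rpow_neg_div_le hp hp1)
    (hitBound_nonneg (by linarith : (0 : ℝ) ≤ p) b m)

lemma one_le_hitBound (hp : 1 / 2 < p) (hp1 : p < 1) {b m : ℝ} (hm : 0 ≤ m) (hbm : p < b / m) :
    1 ≤ hitBound p b m := by
  have hm_pos : 0 < m := hm.lt_of_ne (by rintro rfl; rw [div_zero] at hbm; linarith)
  refine one_le_rpow (by linarith) (neg_nonneg.2 (div_nonpos_of_nonpos_of_nonneg ?_ (by linarith)))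
  rw [lt_div_iff₀ hm_pos] at hbm
  linarith

end Bound

section Patterns

variable {p b m : ℝ} {N : ℕ}

def HitsBy (p b m : ℝ) (N : ℕ) (s : ℕ → ℝ) : Prop :=
  ∃ k ≤ N, p < (b + ∑ i ∈ range k, s i) / (m + k)

lemma hitsBy_zero_iff {s : ℕ → ℝ} : HitsBy p b m 0 s ↔ p < b / m := by
  simp [HitsBy]

lemma hitsBy_succ_iff (hbm : ¬ p < b / m) {s : ℕ → ℝ} :
    HitsBy p b m (N + 1) s ↔ HitsBy p (b + s 0) (m + 1) N (fun i => s (i + 1)) := by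
  constructor
  · rintro ⟨_ | k, hk, hlt⟩
    · exact absurd (by simpa using hlt) hbm
    · refine ⟨k, by omega, ?_⟩
      rwa [sum_range_succ', add_comm _ (s 0), ← add_assoc, Nat.cast_succ, ← add_assoc,
        add_right_comm m] at hlt
  · rintro ⟨k, hk, hlt⟩
    refine ⟨k + 1, by omega, ?_⟩
    rwa [sum_range_succ', add_comm _ (s 0), ← add_assoc, Nat.cast_succ, ← add_assoc,
      add_right_comm m]

def patternSeq (v : Fin N → Bool) (i : ℕ) : ℝ :=
  if h : i < N then (v ⟨i, h⟩).toNat else 0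

@[simp]
lemma patternSeq_cons_zero (c : Bool) (w : Fin N → Bool) :
    patternSeq (Fin.cons c w : Fin (N + 1) → Bool) 0 = c.toNat := by
  simp [patternSeq]

@[simp]
lemma patternSeq_cons_succ (c : Bool) (w : Fin N → Bool) (i : ℕ) :
    patternSeq (Fin.cons c w : Fin (N + 1) → Bool) (i + 1) = patternSeq w i := by
  by_cases h : i < N
  · simp [patternSeq, h, ← Fin.succ_mk]
  · simp [patternSeq, h]

lemma hitsBy_congr {s t : ℕ → ℝ} (hst : ∀ i < N, s i = t i) :
    HitsBy p b m N s ↔ HitsBy p b m N t := by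
  refine exists_congr fun k => and_congr_right fun hk => ?_
  rw [sum_congr rfl fun i hi => hst i ((mem_range.1 hi).trans_le hk)]

lemma monotone_hitsBy (s : ℕ → ℝ) : Monotone fun N => HitsBy p b m N s :=
  fun _ _ hNM ⟨k, hk, hlt⟩ => ⟨k, hk.trans hNM, hlt⟩

lemma exists_lt_iff_exists_hitsBy {s : ℕ → ℝ} :
    (∃ k : ℕ, p < (b + ∑ i ∈ range k, s i) / (m + k)) ↔ ∃ N, HitsBy p b m N s :=
  ⟨fun ⟨k, hk⟩ => ⟨k, k, le_rfl, hk⟩, fun ⟨_, k, _, hk⟩ => ⟨k, hk⟩⟩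

open Classical in
noncomputable def hitPatterns (p b m : ℝ) (N : ℕ) : Finset (Fin N → Bool) :=
  univ.filter fun v => HitsBy p b m N (patternSeq v)

lemma card_hitPatterns_succ (hbm : ¬ p < b / m) :
    #(hitPatterns p b m (N + 1)) =
      #(hitPatterns p (b + 1) (m + 1) N) + #(hitPatterns p b (m + 1) N) := by
  classical
  simp only [hitPatterns, card_filter]
  rw [← (Fin.consEquiv fun _ => Bool).sum_comp, Fintype.sum_prod_type, Fintype.sum_bool]
  simp [Fin.consEquiv, hitsBy_succ_iff hbm]

lemma card_hitPatterns_le_of_lt (hp : 1 / 2 < p) (hp1 : p < 1) (hm : 0 ≤ m) (hbm : p < b / m) :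
    (#(hitPatterns p b m N) : ℝ) ≤ 2 ^ N * hitBound p b m := by
  have hcard : #(hitPatterns p b m N) ≤ 2 ^ N := by
    simpa using card_le_univ (hitPatterns p b m N)
  calc (#(hitPatterns p b m N) : ℝ) ≤ 2 ^ N := mod_cast hcard
    _ ≤ 2 ^ N * hitBound p b m :=
      le_mul_of_one_le_right (by positivity) (one_le_hitBound hp hp1 hm hbm)

lemma card_hitPatterns_le (hp : 1 / 2 < p) (hp1 : p < 1) (hm : 0 ≤ m) :
    (#(hitPatterns p b m N) : ℝ) ≤ 2 ^ N * hitBound p b m := by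
  induction N generalizing b m with
  | zero =>
    by_cases hbm : p < b / m
    · exact card_hitPatterns_le_of_lt hp hp1 hm hbm
    simpa [hitPatterns, hitsBy_zero_iff, hbm] using hitBound_nonneg (by linarith) b m
  | succ N ih =>
    by_cases hbm : p < b / m
    · exact card_hitPatterns_le_of_lt hp hp1 hm hbm
    have hm' : 0 ≤ m + 1 := by linarith
    rw [card_hitPatterns_succ hbm, Nat.cast_add]
    calc _ ≤ 2 ^ N * hitBound p (b + 1) (m + 1) + 2 ^ N * hitBound p b (m + 1) :=
          add_le_add (ih hm') (ih hm')
      _ ≤ 2 ^ N * (2 * hitBound p b m) := by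
          rw [← mul_add]
          exact mul_le_mul_of_nonneg_left (hitBound_succ_add_le hp hp1 b m) (by positivity)
      _ = 2 ^ (N + 1) * hitBound p b m := by ring

end Patterns

section Measure

variable {Ω : Type*} {X : ℕ → Ω → ℝ}

noncomputable def firstFlips (X : ℕ → Ω → ℝ) (N : ℕ) (ω : Ω) : Fin N → Bool :=
  fun i => X i ω = 1

lemma decide_eq_iff_eq_toNat {x : ℝ} (hx : x = 0 ∨ x = 1) (c : Bool) :
    decide (x = 1) = c ↔ x = c.toNat := by
  rcases hx with rfl | rfl <;> cases c <;> simp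

lemma preimage_firstFlips_singleton (h01 : ∀ i ω, X i ω = 0 ∨ X i ω = 1) {N : ℕ}
    (v : Fin N → Bool) :
    firstFlips X N ⁻¹' {v} = ⋂ i : Fin N, X i ⁻¹' {((v i).toNat : ℝ)} := by
  ext ω
  simp only [Set.mem_preimage, Set.mem_singleton_iff, Set.mem_iInter, funext_iff, firstFlips]
  exact forall_congr' fun i => decide_eq_iff_eq_toNat (h01 i ω) (v i)

lemma hitsBy_iff_firstFlips_mem (h01 : ∀ i ω, X i ω = 0 ∨ X i ω = 1) {p b m : ℝ} {N : ℕ}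
    (ω : Ω) : HitsBy p b m N (X · ω) ↔ firstFlips X N ω ∈ hitPatterns p b m N := by
  have hflips : ∀ i < N, X i ω = patternSeq (firstFlips X N ω) i := fun i hi => by
    simpa [patternSeq, hi, firstFlips] using (decide_eq_iff_eq_toNat (h01 i ω) _).1 rfl
  simp only [hitPatterns, mem_filter, mem_univ, true_and, hitsBy_congr hflips]

namespace IsFairCoinSeq

variable [MeasurableSpace Ω] {μ : Measure Ω} [IsProbabilityMeasure μ]

lemma measure_preimage_toNat (hX : IsFairCoinSeq μ X) (i : ℕ) (c : Bool) :
    μ (X i ⁻¹' {(c.toNat : ℝ)}) = 2⁻¹ := by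
  obtain ⟨hmeas, h01, hhalf, -⟩ := hX
  have hheads : MeasurableSet {ω | X i ω = 1} := hmeas i (measurableSet_singleton 1)
  cases c
  · have htails : X i ⁻¹' {((false.toNat : ℕ) : ℝ)} = {ω | X i ω = 1}ᶜ := by
      ext ω
      rcases h01 i ω with h | h <;> simp [h]
    rw [htails, prob_compl_eq_one_sub hheads, hhalf]
    norm_num
  · rw [show X i ⁻¹' {((true.toNat : ℕ) : ℝ)} = {ω | X i ω = 1} by ext; simp, hhalf, one_div]

lemma measure_preimage_firstFlips (hX : IsFairCoinSeq μ X) (N : ℕ) (v : Fin N → Bool) :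
    μ (firstFlips X N ⁻¹' {v}) = 2⁻¹ ^ N := by
  have hindep : iIndepFun (fun i : Fin N => X i) μ := hX.2.2.2.precomp Fin.val_injective
  rw [preimage_firstFlips_singleton hX.2.1,
    hindep.meas_iInter fun i => ⟨_, measurableSet_singleton _, rfl⟩]
  simp [hX.measure_preimage_toNat]

lemma measure_hitsBy (hX : IsFairCoinSeq μ X) (p b m : ℝ) (N : ℕ) :
    μ {ω | HitsBy p b m N (X · ω)} = #(hitPatterns p b m N) / 2 ^ N := by
  have hevent : {ω | HitsBy p b m N (X · ω)} = firstFlips X N ⁻¹' ↑(hitPatterns p b m N) := by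
    ext ω
    exact hitsBy_iff_firstFlips_mem hX.2.1 ω
  rw [hevent, ← sum_measure_preimage_singleton]
  · simp [hX.measure_preimage_firstFlips, div_eq_mul_inv, ENNReal.inv_pow]
  · intro v _
    rw [preimage_firstFlips_singleton hX.2.1]
    exact MeasurableSet.iInter fun i => hX.1 i (measurableSet_singleton _)

lemma measure_hitsBy_le (hX : IsFairCoinSeq μ X) {p b m : ℝ} (hp : 1 / 2 < p) (hp1 : p < 1)
    (hm : 0 ≤ m) (N : ℕ) :
    μ {ω | HitsBy p b m N (X · ω)} ≤ ENNReal.ofReal (hitBound p b m) := by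
  rw [hX.measure_hitsBy, ENNReal.le_ofReal_iff_toReal_le (ENNReal.div_ne_top (by simp) (by simp))
    (hitBound_nonneg (by linarith) b m)]
  simpa [ENNReal.toReal_div, div_le_iff₀, mul_comm] using card_hitPatterns_le hp hp1 hm

end IsFairCoinSeq

end Measure

theorem hitProb_le_rpow_general {Ω : Type*} [MeasurableSpace Ω] (μ : Measure Ω)
    [IsProbabilityMeasure μ] (X : ℕ → Ω → ℝ) (hX : IsFairCoinSeq μ X)
    (a n : ℕ) (p : ℝ)
    (hp : max ((a : ℝ) / n) (1 / 2) < p) (hp1 : p < 1) :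
    hitProb μ X a n p ≤ (2 * p) ^ (-(((n : ℝ) * p - a) / (1 - p))) := by
  have hp2 : 1 / 2 < p := (le_max_right _ _).trans_lt hp
  have hevent : {ω | ∃ k, p < headsProp X a n k ω} = ⋃ N, {ω | HitsBy p a n N (X · ω)} := by
    ext ω
    simp only [Set.mem_ofPred_eq, Set.mem_iUnion, headsProp]
    exact exists_lt_iff_exists_hitsBy
  have hmono : Monotone fun N => {ω | HitsBy p a n N (X · ω)} :=
    fun _ _ hNM _ hω => monotone_hitsBy _ hNM hω
  rw [hitProb, hevent, hmono.measure_iUnion]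
  exact ENNReal.toReal_le_of_le_ofReal (hitBound_nonneg (by linarith) _ _)
    (iSup_le (hX.measure_hitsBy_le hp2 hp1 n.cast_nonneg))

/-- For `max(a/n, 1/2) < p < 1`, `P(a,n,p) ≤ (2p)^(−(np−a)/(1−p))`. -/
theorem hitProb_le_rpow {Ω : Type*} [MeasurableSpace Ω] (μ : Measure Ω)
    [IsProbabilityMeasure μ] (X : ℕ → Ω → ℝ) (hX : IsFairCoinSeq μ X)
    (a n : ℕ) (hn : 1 ≤ n) (han : a ≤ n) (p : ℝ)
    (hp : max ((a : ℝ) / n) (1 / 2) < p) (hp1 : p < 1) :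
    hitProb μ X a n p ≤ (2 * p) ^ (-(((n : ℝ) * p - a) / (1 - p))) :=
  hitProb_le_rpow_general μ X hX a n p hp hp1
end

section
/- For every position (a,n), the clairvoyant value satisfies Ṽ(a,n) ≤ max(a/n, 1/2) + ∫_{max(a/n, 1/2)}^{1} (2p)^{−(np−a)/(1−p)} dp. -/
open MeasureTheory ProbabilityTheory Real

/-!
For `1/2 < p < 1` put `λ = log (2p) / (1 - p)`, so that `exp (λ (1 - p)) = 2p`. Gibbs' inequality
`p log (2p) + (1 - p) log (2(1 - p)) ≥ 0` then says that a fair coin `X` has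
`E[exp (λ (X - p))] ≤ 1`, so `exp (λ (S_k - p k))` is a nonnegative supermartingale. Stopping it
when the proportion of heads first exceeds `p` gives the maximal inequality
`P(sup_k R_k > p) ≤ exp (-λ (n p - a)) = (2p)^(-(np - a)/(1 - p))`. The theorem follows from the
layer-cake formula `E[sup_k R_k] = ∫₀¹ P(sup_k R_k > t) dt`, bounding the integrand by `1` below
`max (a/n) (1/2)` and by the maximal inequality above it.
-/

open scoped ENNReal

theorem ProbabilityTheory.iIndepFun.indepFun_of_dependsOn_Iio {Ω β γ : Type*}
    [MeasurableSpace Ω] {μ : Measure Ω} [MeasurableSpace β] [MeasurableSpace γ] [Nonempty β]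
    {X : ℕ → Ω → β} (hXm : ∀ i, Measurable (X i)) (hX : iIndepFun X μ) {K : ℕ}
    {G : (ℕ → β) → γ} (hG : Measurable G) (hGK : DependsOn G (Set.Iio K)) :
    IndepFun (fun ω ↦ G (X · ω)) (X K) μ := by
  classical
  let extend (v : Finset.range K → β) (i : ℕ) : β :=
    if h : i ∈ Finset.range K then v ⟨i, h⟩ else Classical.arbitrary β
  have hext : Measurable extend := by
    refine measurable_pi_lambda _ fun i ↦ ?_
    by_cases h : i ∈ Finset.range K
    · simpa only [extend, dif_pos h] using measurable_pi_apply _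
    · simp only [extend, dif_neg h]; exact measurable_const
  have hGX : (fun ω ↦ G (X · ω)) = (G ∘ extend) ∘ fun ω (i : Finset.range K) ↦ X i ω := by
    funext ω
    exact hGK fun i hi ↦ by simp [extend, Set.mem_Iio.1 hi]
  rw [hGX]
  exact (hX.indepFun_finset _ {K} (by simp) hXm).comp (hG.comp hext)
    (measurable_pi_apply ⟨K, Finset.mem_singleton_self K⟩)

def centeredSum (p : ℝ) (k : ℕ) (x : ℕ → ℝ) : ℝ := ∑ i ∈ Finset.range k, (x i - p)

def staysBelow (p c : ℝ) (K : ℕ) : Set (ℕ → ℝ) := {x | ∀ j < K, centeredSum p j x ≤ c}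

-- Valued in `ℝ≥0∞` so that the stopping argument below runs on lintegrals, with no integrability
-- side conditions.
noncomputable def expCentered (l p : ℝ) (K : ℕ) (x : ℕ → ℝ) : ℝ≥0∞ :=
  ENNReal.ofReal (exp (l * centeredSum p K x))

section SequenceSpace

variable {p c l : ℝ} {K : ℕ}

lemma centeredSum_succ (x : ℕ → ℝ) :
    centeredSum p (K + 1) x = centeredSum p K x + (x K - p) :=
  Finset.sum_range_succ _ _

lemma measurable_centeredSum : Measurable (centeredSum p K) :=
  Finset.measurable_sum _ fun i _ ↦ by fun_prop

lemma dependsOn_centeredSum : DependsOn (centeredSum p K) (Set.Iio K) := fun x y h ↦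
  Finset.sum_congr rfl fun i hi ↦ by rw [h i (Finset.mem_range.1 hi)]

lemma measurableSet_staysBelow : MeasurableSet (staysBelow p c K) := by
  simp only [staysBelow, Set.ofPred_forall]
  exact .iInter fun j ↦ .iInter fun _ ↦ measurableSet_le measurable_centeredSum measurable_const

lemma staysBelow_zero : staysBelow p c 0 = Set.univ := by simp [staysBelow]

lemma staysBelow_succ :
    staysBelow p c (K + 1) = staysBelow p c K ∩ {x | centeredSum p K x ≤ c} := by
  ext x
  simp only [staysBelow, Set.mem_inter_iff, Set.mem_ofPred_eq, Nat.lt_succ_iff_lt_or_eq,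
    or_imp, forall_and, forall_eq]

lemma measurable_expCentered : Measurable (expCentered l p K) :=
  ENNReal.measurable_ofReal.comp (measurable_exp.comp (measurable_centeredSum.const_mul l))

lemma expCentered_zero : expCentered l p 0 = 1 := by
  funext x; simp [expCentered, centeredSum]

lemma expCentered_succ (x : ℕ → ℝ) :
    expCentered l p (K + 1) x = expCentered l p K x * ENNReal.ofReal (exp (l * (x K - p))) := by
  rw [expCentered, expCentered, centeredSum_succ, mul_add, exp_add,
    ENNReal.ofReal_mul (exp_pos _).le]

lemma dependsOn_indicator_staysBelow_succ :
    DependsOn ((staysBelow p c (K + 1)).indicator (expCentered l p K)) (Set.Iio K) := by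
  intro x y h
  have hsum : ∀ j ≤ K, centeredSum p j x = centeredSum p j y := fun j hj ↦
    dependsOn_centeredSum fun i hi ↦ h i (lt_of_lt_of_le hi hj)
  have hmem : x ∈ staysBelow p c (K + 1) ↔ y ∈ staysBelow p c (K + 1) :=
    forall₂_congr fun j hj ↦ by rw [hsum j (Nat.lt_succ_iff.1 hj)]
  by_cases hx : x ∈ staysBelow p c (K + 1)
  · rw [Set.indicator_of_mem hx, Set.indicator_of_mem (hmem.1 hx), expCentered, expCentered,
      hsum K le_rfl]
  · rw [Set.indicator_of_notMem hx, Set.indicator_of_notMem (hmem.not.1 hx)]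

lemma indicator_exceeds_add_indicator_staysBelow_succ_le (hl : 0 ≤ l) (x : ℕ → ℝ) :
    (staysBelow p c K ∩ {x | c < centeredSum p K x}).indicator
        (fun _ ↦ ENNReal.ofReal (exp (l * c))) x +
      (staysBelow p c (K + 1)).indicator (expCentered l p K) x ≤
      (staysBelow p c K).indicator (expCentered l p K) x := by
  by_cases hK : x ∈ staysBelow p c K
  · by_cases hc : c < centeredSum p K x
    · have hnot : x ∉ staysBelow p c (K + 1) := by
        rw [staysBelow_succ]; exact fun h ↦ (not_le.2 hc) h.2
      rw [Set.indicator_of_mem (Set.mem_inter hK hc), Set.indicator_of_notMem hnot, add_zero,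
        Set.indicator_of_mem hK, expCentered]
      gcongr
    · have hmem : x ∈ staysBelow p c (K + 1) := by
        rw [staysBelow_succ]; exact ⟨hK, not_lt.1 hc⟩
      rw [Set.indicator_of_notMem fun h ↦ hc h.2, Set.indicator_of_mem hmem, zero_add,
        Set.indicator_of_mem hK]
  · have hnot : x ∉ staysBelow p c (K + 1) := by
      rw [staysBelow_succ]; exact fun h ↦ hK h.1
    rw [Set.indicator_of_notMem fun h ↦ hK h.1, Set.indicator_of_notMem hnot,
      Set.indicator_of_notMem hK, add_zero]

end SequenceSpace

section Ville

variable {Ω : Type*} [MeasurableSpace Ω] {μ : Measure Ω} {X : ℕ → Ω → ℝ} {p c l : ℝ} {K : ℕ}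

lemma lintegral_exp_mul_sub_le_one (hint : Integrable (fun ω ↦ exp (l * X K ω)) μ)
    (hmgf : mgf (X K) μ l ≤ exp (l * p)) :
    ∫⁻ ω, ENNReal.ofReal (exp (l * (X K ω - p))) ∂μ ≤ 1 := by
  have hfac : (fun ω ↦ exp (l * (X K ω - p))) = fun ω ↦ exp (l * X K ω) * exp (-(l * p)) := by
    funext ω; rw [← exp_add]; ring_nf
  rw [← ofReal_integral_eq_lintegral_ofReal (hfac ▸ hint.mul_const _)
    (Filter.Eventually.of_forall fun _ ↦ (exp_pos _).le), ← ENNReal.ofReal_one]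
  refine ENNReal.ofReal_le_ofReal ?_
  rw [hfac, integral_mul_const, ← mgf, exp_neg, ← div_eq_mul_inv, div_le_one (exp_pos _)]
  exact hmgf

variable (hXm : ∀ i, Measurable (X i)) (hX : iIndepFun X μ)
  (hint : ∀ i, Integrable (fun ω ↦ exp (l * X i ω)) μ) (hmgf : ∀ i, mgf (X i) μ l ≤ exp (l * p))
include hXm hX hint hmgf

lemma lintegral_indicator_staysBelow_succ_le :
    ∫⁻ ω, (staysBelow p c (K + 1)).indicator (expCentered l p (K + 1)) (X · ω) ∂μ ≤
      ∫⁻ ω, (staysBelow p c (K + 1)).indicator (expCentered l p K) (X · ω) ∂μ := by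
  have hG : Measurable ((staysBelow p c (K + 1)).indicator (expCentered l p K)) :=
    measurable_expCentered.indicator measurableSet_staysBelow
  have hY : Measurable fun ω (i : ℕ) ↦ X i ω := measurable_pi_lambda _ hXm
  have hsplit : (fun ω ↦ (staysBelow p c (K + 1)).indicator (expCentered l p (K + 1)) (X · ω)) =
      fun ω ↦ (staysBelow p c (K + 1)).indicator (expCentered l p K) (X · ω) *
        ENNReal.ofReal (exp (l * (X K ω - p))) := by
    funext ω
    by_cases h : (X · ω) ∈ staysBelow p c (K + 1)
    · rw [Set.indicator_of_mem h, Set.indicator_of_mem h, expCentered_succ]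
    · rw [Set.indicator_of_notMem h, Set.indicator_of_notMem h, zero_mul]
  have hindep := (hX.indepFun_of_dependsOn_Iio hXm hG dependsOn_indicator_staysBelow_succ).comp
    measurable_id (by fun_prop : Measurable fun t ↦ ENNReal.ofReal (exp (l * (t - p))))
  rw [hsplit]
  calc _ = _ * _ := lintegral_mul_eq_lintegral_mul_lintegral_of_indepFun''
        (hG.comp hY).aemeasurable (by fun_prop) hindep
    _ ≤ _ := mul_le_of_le_one_right' (lintegral_exp_mul_sub_le_one (hint K) (hmgf K))

/-- Optional stopping for the supermartingale `exp (l * centeredSum p K)`, killed when the centered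
sum first exceeds `c`. -/
lemma ofReal_exp_mul_measure_add_lintegral_le_one (hl : 0 ≤ l) (K : ℕ) :
    ENNReal.ofReal (exp (l * c)) * μ {ω | (X · ω) ∉ staysBelow p c K} +
      ∫⁻ ω, (staysBelow p c K).indicator (expCentered l p K) (X · ω) ∂μ ≤ 1 := by
  have hY : Measurable fun ω (i : ℕ) ↦ X i ω := measurable_pi_lambda _ hXm
  induction K with
  | zero =>
    have := hX.isProbabilityMeasure
    simp [staysBelow_zero, expCentered_zero]
  | succ K ih =>
    set e := ENNReal.ofReal (exp (l * c))
    set T := staysBelow p c K ∩ {x | c < centeredSum p K x}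
    have hT : MeasurableSet T :=
      measurableSet_staysBelow.inter (measurableSet_lt measurable_const measurable_centeredSum)
    have hunion : {ω | (X · ω) ∉ staysBelow p c (K + 1)} =
        {ω | (X · ω) ∉ staysBelow p c K} ∪ (fun ω i ↦ X i ω) ⁻¹' T := by
      ext ω
      simp only [staysBelow_succ, T, Set.mem_ofPred_eq, Set.mem_union, Set.mem_inter_iff,
        Set.mem_preimage, not_and, not_le]
      tauto
    have hdisj : Disjoint {ω | (X · ω) ∉ staysBelow p c K} ((fun ω i ↦ X i ω) ⁻¹' T) :=
      Set.disjoint_left.2 fun ω h h' ↦ h h'.1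
    have hfirst : e * μ ((fun ω i ↦ X i ω) ⁻¹' T) +
        ∫⁻ ω, (staysBelow p c (K + 1)).indicator (expCentered l p K) (X · ω) ∂μ ≤
        ∫⁻ ω, (staysBelow p c K).indicator (expCentered l p K) (X · ω) ∂μ := by
      rw [← lintegral_indicator_const_comp hY hT, ← lintegral_add_left
        (f := fun ω ↦ T.indicator (fun _ ↦ e) (X · ω)) ((measurable_const.indicator hT).comp hY)]
      exact lintegral_mono fun ω ↦ indicator_exceeds_add_indicator_staysBelow_succ_le hl _
    calc _ ≤ e * μ {ω | (X · ω) ∉ staysBelow p c K} + (e * μ ((fun ω i ↦ X i ω) ⁻¹' T) +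
          ∫⁻ ω, (staysBelow p c (K + 1)).indicator (expCentered l p K) (X · ω) ∂μ) := by
          rw [hunion, measure_union hdisj (hY hT), mul_add, add_assoc]
          gcongr _ + (_ + ?_)
          exact lintegral_indicator_staysBelow_succ_le hXm hX hint hmgf
      _ ≤ 1 := le_trans (by gcongr) ih

theorem measure_exists_lt_sum_sub_le_exp (hl : 0 ≤ l) (c : ℝ) :
    μ {ω | ∃ k, c < ∑ i ∈ Finset.range k, (X i ω - p)} ≤ ENNReal.ofReal (exp (-(l * c))) := by
  have hunion : {ω | ∃ k, c < ∑ i ∈ Finset.range k, (X i ω - p)} =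
      ⋃ K, {ω | (X · ω) ∉ staysBelow p c K} := by
    ext ω
    simp only [staysBelow, centeredSum, Set.mem_ofPred_eq, Set.mem_iUnion, not_forall, not_le]
    exact ⟨fun ⟨k, hk⟩ ↦ ⟨k + 1, k, k.lt_succ_self, hk⟩, fun ⟨_, k, _, hk⟩ ↦ ⟨k, hk⟩⟩
  have hmono : Monotone fun K ↦ {ω | (X · ω) ∉ staysBelow p c K} :=
    fun K K' hKK' ω h h' ↦ h fun j hj ↦ h' j (lt_of_lt_of_le hj hKK')
  rw [hunion, hmono.measure_iUnion]
  refine iSup_le fun K ↦ ?_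
  have hK := (le_add_right le_rfl).trans
    (ofReal_exp_mul_measure_add_lintegral_le_one (c := c) hXm hX hint hmgf hl K)
  calc μ {ω | (X · ω) ∉ staysBelow p c K}
      = ENNReal.ofReal (exp (-(l * c))) *
          (ENNReal.ofReal (exp (l * c)) * μ {ω | (X · ω) ∉ staysBelow p c K}) := by
        rw [← mul_assoc, ← ENNReal.ofReal_mul (exp_pos _).le, ← exp_add, neg_add_cancel, exp_zero,
          ENNReal.ofReal_one, one_mul]
    _ ≤ ENNReal.ofReal (exp (-(l * c))) := mul_le_of_le_one_right' hK

end Ville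

lemma one_add_exp_div_two_le_exp_mul {p : ℝ} (hp0 : 0 < p) (hp1 : p < 1) :
    (1 + exp (log (2 * p) / (1 - p))) / 2 ≤ exp (log (2 * p) / (1 - p) * p) := by
  set l := log (2 * p) / (1 - p) with hl
  have hq : 0 < 1 - p := by linarith
  have hexp_one_sub : exp (l * (1 - p)) = 2 * p := by
    rw [div_mul_cancel₀ _ hq.ne', exp_log (by positivity)]
  have hgibbs : exp (-(l * p)) ≤ 2 * (1 - p) := by
    have hH := binEntropy_le_log_two (p := p)
    rw [binEntropy, log_inv, log_inv] at hH
    have hmul : (log (2 * (1 - p)) + l * p) * (1 - p) =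
        log 2 - (p * -log p + (1 - p) * -log (1 - p)) := by
      rw [hl, log_mul two_ne_zero hp0.ne', log_mul two_ne_zero hq.ne']
      field_simp
      ring
    have hnonneg := nonneg_of_mul_nonneg_left (hmul ▸ sub_nonneg.2 hH) hq
    rw [← exp_log (by positivity : 0 < 2 * (1 - p)), exp_le_exp]
    linarith
  have hsplit : exp l = exp (l * p) * (2 * p) := by
    rw [← hexp_one_sub, ← exp_add]; ring_nf
  have hone : 1 ≤ 2 * (1 - p) * exp (l * p) := by
    calc (1 : ℝ) = exp (-(l * p)) * exp (l * p) := by rw [← exp_add, neg_add_cancel, exp_zero]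
      _ ≤ 2 * (1 - p) * exp (l * p) := by gcongr
  rw [hsplit]
  linarith

section FairCoin

variable {Ω : Type*} [MeasurableSpace Ω] {μ : Measure Ω} {X : ℕ → Ω → ℝ}

lemma IsFairCoinSeq.nonneg (hX : IsFairCoinSeq μ X) (i : ℕ) (ω : Ω) : 0 ≤ X i ω := by
  rcases hX.2.1 i ω with h | h <;> simp [h]

lemma IsFairCoinSeq.le_one (hX : IsFairCoinSeq μ X) (i : ℕ) (ω : Ω) : X i ω ≤ 1 := by
  rcases hX.2.1 i ω with h | h <;> simp [h]

lemma IsFairCoinSeq.exp_mul_eq (hX : IsFairCoinSeq μ X) (i : ℕ) (t : ℝ) :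
    (fun ω ↦ exp (t * X i ω)) = fun ω ↦ 1 + (exp t - 1) * {ω | X i ω = 1}.indicator 1 ω := by
  funext ω
  rcases hX.2.1 i ω with h | h <;> simp [h]

lemma IsFairCoinSeq.integrable_exp_mul [IsFiniteMeasure μ] (hX : IsFairCoinSeq μ X) (i : ℕ)
    (t : ℝ) : Integrable (fun ω ↦ exp (t * X i ω)) μ := by
  rw [hX.exp_mul_eq i t]
  exact (integrable_const 1).add
    (((integrable_const 1).indicator (hX.1 i (measurableSet_singleton 1))).const_mul _)

lemma IsFairCoinSeq.mgf_eq [IsProbabilityMeasure μ] (hX : IsFairCoinSeq μ X) (i : ℕ) (t : ℝ) :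
    mgf (X i) μ t = (1 + exp t) / 2 := by
  have hs : MeasurableSet {ω | X i ω = 1} := hX.1 i (measurableSet_singleton 1)
  rw [mgf, hX.exp_mul_eq i t, integral_add (integrable_const 1)
    (((integrable_const 1).indicator hs).const_mul _), integral_const_mul,
    integral_indicator_one hs, measureReal_def, hX.2.2.1 i]
  simp only [integral_const, probReal_univ, smul_eq_mul, one_mul, ENNReal.toReal_div,
    ENNReal.toReal_one, ENNReal.toReal_ofNat]
  ring

theorem IsFairCoinSeq.measure_exists_lt_sum_sub_le_rpow (hX : IsFairCoinSeq μ X) {p : ℝ}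
    (hp : 1 / 2 < p) (hp1 : p < 1) (c : ℝ) :
    μ {ω | ∃ k, c < ∑ i ∈ Finset.range k, (X i ω - p)} ≤
      ENNReal.ofReal ((2 * p) ^ (-(c / (1 - p)))) := by
  have := hX.2.2.2.isProbabilityMeasure
  have hl : 0 ≤ log (2 * p) / (1 - p) := div_nonneg (log_nonneg (by linarith)) (by linarith)
  convert measure_exists_lt_sum_sub_le_exp hX.1 hX.2.2.2 (fun i ↦ hX.integrable_exp_mul i _)
    (fun i ↦ (hX.mgf_eq i _).trans_le (one_add_exp_div_two_le_exp_mul (by linarith) hp1)) hl c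
    using 2
  rw [rpow_def_of_pos (by linarith)]
  ring_nf

end FairCoin

lemma antitone_measureReal_lt {Ω : Type*} [MeasurableSpace Ω] {μ : Measure Ω}
    [IsFiniteMeasure μ] {f : Ω → ℝ} : Antitone fun t ↦ μ.real {ω | t < f ω} :=
  fun _ _ hst ↦ measureReal_mono fun _ hω ↦ lt_of_le_of_lt hst hω

theorem integral_le_add_intervalIntegral_measureReal_lt {Ω : Type*} [MeasurableSpace Ω]
    {μ : Measure Ω} [IsProbabilityMeasure μ] {f : Ω → ℝ} (hf : Measurable f)
    (hf0 : ∀ ω, 0 ≤ f ω) {b m : ℝ} (hfb : ∀ ω, f ω ≤ b) (hm0 : 0 ≤ m) (hmb : m ≤ b) :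
    ∫ ω, f ω ∂μ ≤ m + ∫ t in m..b, μ.real {ω | t < f ω} := by
  have hint : Integrable f μ := .of_bound hf.aestronglyMeasurable b
    (.of_forall fun ω ↦ by rw [norm_of_nonneg (hf0 ω)]; exact hfb ω)
  have htail : ∀ t ∈ Set.Ioi 0 \ Set.Ioc 0 b, μ.real {ω | t < f ω} = 0 := fun t ht ↦ by
    have hbt : b < t := not_le.1 fun h ↦ ht.2 ⟨ht.1, h⟩
    simp [fun ω ↦ not_lt.2 ((hfb ω).trans hbt.le)]
  have hhead : ∫ t in (0 : ℝ)..m, μ.real {ω | t < f ω} ≤ m := by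
    refine (Real.le_norm_self _).trans ((intervalIntegral.norm_integral_le_of_norm_le_const
      fun t _ ↦ ?_).trans_eq (by rw [one_mul, sub_zero, abs_of_nonneg hm0]))
    rw [norm_of_nonneg measureReal_nonneg]
    exact measureReal_le_one
  rw [hint.integral_eq_integral_meas_lt (.of_forall hf0),
    setIntegral_eq_of_subset_of_forall_sdiff_eq_zero measurableSet_Ioi Set.Ioc_subset_Ioi_self
      htail, ← intervalIntegral.integral_of_le (hm0.trans hmb),
    ← intervalIntegral.integral_add_adjacent_intervals antitone_measureReal_lt.intervalIntegrable
      antitone_measureReal_lt.intervalIntegrable]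
  gcongr

lemma headsProp_nonneg {Ω : Type*} {X : ℕ → Ω → ℝ} (hX : ∀ i ω, 0 ≤ X i ω) (a n k : ℕ)
    (ω : Ω) : 0 ≤ headsProp X a n k ω :=
  div_nonneg (add_nonneg a.cast_nonneg (Finset.sum_nonneg fun i _ ↦ hX i ω)) (by positivity)

lemma headsProp_le_one {Ω : Type*} {X : ℕ → Ω → ℝ} (hX : ∀ i ω, X i ω ≤ 1) {a n : ℕ}
    (han : a ≤ n) (k : ℕ) (ω : Ω) : headsProp X a n k ω ≤ 1 := by
  refine div_le_one_of_le₀ ?_ (by positivity)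
  have hsum : ∑ i ∈ Finset.range k, X i ω ≤ k := by
    simpa using Finset.sum_le_sum fun i (_ : i ∈ Finset.range k) ↦ hX i ω
  have : (a : ℝ) ≤ n := by exact_mod_cast han
  linarith

lemma bddAbove_range_headsProp {Ω : Type*} {X : ℕ → Ω → ℝ} (hX : ∀ i ω, X i ω ≤ 1) {a n : ℕ}
    (han : a ≤ n) (ω : Ω) : BddAbove (Set.range fun k ↦ headsProp X a n k ω) :=
  ⟨1, Set.forall_mem_range.2 fun k ↦ headsProp_le_one hX han k ω⟩

lemma lt_headsProp_iff {Ω : Type*} {X : ℕ → Ω → ℝ} {a n : ℕ} (hn : 1 ≤ n) (k : ℕ) (ω : Ω)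
    (t : ℝ) : t < headsProp X a n k ω ↔ n * t - a < ∑ i ∈ Finset.range k, (X i ω - t) := by
  have hnk : (0 : ℝ) < n + k := by positivity
  rw [headsProp, lt_div_iff₀ hnk, Finset.sum_sub_distrib, Finset.sum_const, Finset.card_range,
    nsmul_eq_mul]
  constructor <;> intro h <;> linarith

lemma intervalIntegrable_two_mul_rpow {a n m : ℝ} (hn : 0 ≤ n) (ha : a ≤ n * m)
    (hm : 1 / 2 ≤ m) (hm1 : m ≤ 1) :
    IntervalIntegrable (fun p ↦ (2 * p) ^ (-((n * p - a) / (1 - p)))) volume m 1 := by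
  refine (intervalIntegrable_const (c := (1 : ℝ))).mono_fun'
    (Measurable.aestronglyMeasurable (by measurability))
    (ae_restrict_of_forall_mem measurableSet_uIoc fun p hp ↦ ?_)
  rw [Set.uIoc_of_le hm1] at hp
  have h2p : 1 ≤ 2 * p := by linarith [hp.1]
  have hexp : 0 ≤ (n * p - a) / (1 - p) :=
    div_nonneg (by nlinarith [hp.1]) (by linarith [hp.2])
  dsimp only
  rw [norm_of_nonneg (rpow_nonneg (by linarith) _)]
  exact rpow_le_one_of_one_le_of_nonpos h2p (neg_nonpos.2 hexp)

lemma measureReal_lt_iSup_headsProp_le_rpow {Ω : Type*} [MeasurableSpace Ω] {μ : Measure Ω}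
    {X : ℕ → Ω → ℝ} {a n : ℕ} (hX : IsFairCoinSeq μ X) (hn : 1 ≤ n)
    (han : a ≤ n) {t : ℝ} (ht : 1 / 2 < t) (ht1 : t < 1) :
    μ.real {ω | t < ⨆ k, headsProp X a n k ω} ≤ (2 * t) ^ (-((n * t - a) / (1 - t))) := by
  have hset : {ω | t < ⨆ k, headsProp X a n k ω} =
      {ω | ∃ k, n * t - a < ∑ i ∈ Finset.range k, (X i ω - t)} := by
    ext ω
    simp only [Set.mem_ofPred_eq, lt_ciSup_iff (bddAbove_range_headsProp hX.le_one han ω),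
      lt_headsProp_iff hn]
  rw [hset, measureReal_def]
  exact ENNReal.toReal_le_of_le_ofReal (rpow_nonneg (by linarith) _)
    (hX.measure_exists_lt_sum_sub_le_rpow ht ht1 _)

/-- `Ṽ(a,n) ≤ max(a/n, 1/2) + ∫_{max(a/n,1/2)}^1 (2p)^(−(np−a)/(1−p)) dp`. -/
theorem clairvoyant_le_add_integral_rpow {Ω : Type*} [MeasurableSpace Ω] (μ : Measure Ω)
    [IsProbabilityMeasure μ] (X : ℕ → Ω → ℝ) (hX : IsFairCoinSeq μ X)
    (a n : ℕ) (hn : 1 ≤ n) (han : a ≤ n) :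
    clairvoyantValue μ X a n ≤
      max ((a : ℝ) / n) (1 / 2) +
        ∫ p in (max ((a : ℝ) / n) (1 / 2))..1,
          (2 * p) ^ (-(((n : ℝ) * p - a) / (1 - p))) := by
  set m := max ((a : ℝ) / n) (1 / 2)
  have hn' : (0 : ℝ) < n := by exact_mod_cast hn
  have ham : (a : ℝ) ≤ n * m := by
    rw [← div_le_iff₀' hn']; exact le_max_left _ _
  have hm1 : m ≤ 1 := max_le (div_le_one_of_le₀ (by exact_mod_cast han) hn'.le) (by norm_num)
  have hS : Measurable fun ω ↦ ⨆ k, headsProp X a n k ω := Measurable.iSup fun k ↦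
    (measurable_const.add (Finset.measurable_sum _ fun i _ ↦ hX.1 i)).div_const _
  calc clairvoyantValue μ X a n
      ≤ m + ∫ t in m..1, μ.real {ω | t < ⨆ k, headsProp X a n k ω} :=
        integral_le_add_intervalIntegral_measureReal_lt hS
          (fun ω ↦ (headsProp_nonneg hX.nonneg a n 0 ω).trans
            (le_ciSup (bddAbove_range_headsProp hX.le_one han ω) 0))
          (fun ω ↦ ciSup_le fun k ↦ headsProp_le_one hX.le_one han k ω)
          (by positivity) hm1
    _ ≤ m + ∫ p in m..1, (2 * p) ^ (-(((n : ℝ) * p - a) / (1 - p))) := by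
        gcongr
        exact intervalIntegral.integral_mono_on_of_le_Ioo hm1
          antitone_measureReal_lt.intervalIntegrable
          (intervalIntegrable_two_mul_rpow hn'.le ham (le_max_right _ _) hm1)
          fun t ht ↦ measureReal_lt_iSup_headsProp_le_rpow hX hn han
            ((le_max_right _ _).trans_lt ht.1) ht.2
end

section
/- For every position (a,n), the clairvoyant value satisfies Ṽ(a,n) ≤ max(a/n, 1/2) + (1/(2√n))·∫₀^∞ exp(−u² − (|2a−n|/√n)·u) du. -/
open MeasureTheory ProbabilityTheory Real

/-! Write `G = sup_k R_k` and `M = max (a/n) (1/2)`. Then `E G ≤ M + ∫₀^∞ P(G > M + t) dt`.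
The event `G > p` says that `S_k - p k ≥ p n - a` for some `k`, where `S_k` is the number of heads
among the first `k` new flips. For `p ≥ 1/2` and `l = 4 (p - 1/2)`, Hoeffding's lemma gives
`E exp (l (X - p)) ≤ 1`, so Ville's maximal inequality bounds the probability of that event by
`exp (-l (p n - a))`. At `p = M + t` the exponent is `4 n t² + 2 |2a - n| t`, and the substitution
`u = 2 √n t` turns the resulting Gaussian integral into the stated one. -/

namespace IsFairCoinSeq

variable {Ω : Type*} [MeasurableSpace Ω] {μ : Measure Ω} {X : ℕ → Ω → ℝ}

lemma isProbabilityMeasure (hX : IsFairCoinSeq μ X) : IsProbabilityMeasure μ :=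
  hX.2.2.2.isProbabilityMeasure

lemma shift (hX : IsFairCoinSeq μ X) : IsFairCoinSeq μ (fun i ↦ X (i + 1)) :=
  ⟨fun _ ↦ hX.1 _, fun _ ↦ hX.2.1 _, fun _ ↦ hX.2.2.1 _, hX.2.2.2.precomp (add_left_injective 1)⟩

lemma measureReal_heads (hX : IsFairCoinSeq μ X) (i : ℕ) : μ.real {ω | X i ω = 1} = 1 / 2 := by
  simp [measureReal_def, hX.2.2.1 i]

lemma measureReal_tails (hX : IsFairCoinSeq μ X) (i : ℕ) : μ.real {ω | X i ω = 0} = 1 / 2 := by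
  have := hX.isProbabilityMeasure
  have hcompl : {ω | X i ω = 0} = {ω | X i ω = 1}ᶜ := by
    ext ω
    rcases hX.2.1 i ω with h | h <;> simp [h]
  rw [hcompl, measureReal_compl (hX.1 i (measurableSet_singleton 1)) (s := {ω | X i ω = 1}),
    probReal_univ, hX.measureReal_heads]
  norm_num

lemma indep_head_tail (hX : IsFairCoinSeq μ X) :
    Indep (MeasurableSpace.comap (X 0) inferInstance)
      (⨆ i ∈ Set.Ioi 0, MeasurableSpace.comap (X i) inferInstance) μ := by
  have h := indep_iSup_of_disjoint (fun i ↦ (hX.1 i).comap_le)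
    ((iIndepFun_iff_iIndep _ _ _).1 hX.2.2.2) (S := {0}) (T := Set.Ioi 0) (by simp)
  rwa [iSup_singleton] at h

end IsFairCoinSeq

section Crossing

variable {Ω : Type*}

def crossingEvent (X : ℕ → Ω → ℝ) (c b : ℝ) (N : ℕ) : Set Ω :=
  {ω | ∃ k ≤ N, b ≤ ∑ i ∈ Finset.range k, (X i ω - c)}

variable {X : ℕ → Ω → ℝ} {c b : ℝ} {N : ℕ}

lemma crossingEvent_mono : Monotone (crossingEvent X c b) :=
  fun _ _ hNM _ ⟨k, hk, h⟩ ↦ ⟨k, hk.trans hNM, h⟩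

lemma iUnion_crossingEvent :
    ⋃ N, crossingEvent X c b N = {ω | ∃ k, b ≤ ∑ i ∈ Finset.range k, (X i ω - c)} := by
  ext ω
  simp only [crossingEvent, Set.mem_iUnion, Set.mem_ofPred_eq]
  exact ⟨fun ⟨_, k, _, h⟩ ↦ ⟨k, h⟩, fun ⟨k, h⟩ ↦ ⟨k, k, le_rfl, h⟩⟩

lemma crossingEvent_zero (hb : 0 < b) : crossingEvent X c b 0 = ∅ := by
  simp [crossingEvent, hb.not_ge]

lemma inter_crossingEvent_succ (hb : 0 < b) (x : ℝ) :
    {ω | X 0 ω = x} ∩ crossingEvent X c b (N + 1) =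
      {ω | X 0 ω = x} ∩ crossingEvent (fun i ↦ X (i + 1)) c (b - (x - c)) N := by
  ext ω
  simp only [crossingEvent, Set.mem_inter_iff, Set.mem_ofPred_eq, and_congr_right_iff]
  rintro rfl
  constructor
  · rintro ⟨_ | k, hk, h⟩
    · simp at h; linarith
    · rw [Finset.sum_range_succ'] at h
      exact ⟨k, by omega, by linarith⟩
  · rintro ⟨k, hk, h⟩
    refine ⟨k + 1, by omega, ?_⟩
    rw [Finset.sum_range_succ']
    linarith

lemma measurableSet_crossingEvent {m : MeasurableSpace Ω} (hX : ∀ i, Measurable (X i)) :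
    MeasurableSet (crossingEvent X c b N) := by
  have : crossingEvent X c b N =
      ⋃ k ∈ Finset.range (N + 1), {ω | b ≤ ∑ i ∈ Finset.range k, (X i ω - c)} := by
    ext ω
    simp [crossingEvent]
  rw [this]
  exact Finset.measurableSet_biUnion _ fun k _ ↦ measurableSet_le measurable_const
    (Finset.measurable_sum _ fun i _ ↦ (hX i).sub_const c)

end Crossing

lemma exp_four_mul_add_exp_neg_four_mul_le_two (s : ℝ) :
    exp (4 * s * (1 - (1 / 2 + s))) + exp (-(4 * s * (1 / 2 + s))) ≤ 2 := by
  have hcosh := cosh_le_exp_half_sq (2 * s)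
  rw [cosh_eq] at hcosh
  calc exp (4 * s * (1 - (1 / 2 + s))) + exp (-(4 * s * (1 / 2 + s)))
      = exp (-(4 * s ^ 2)) * (exp (2 * s) + exp (-(2 * s))) := by
        rw [mul_add (exp _), ← exp_add, ← exp_add]; ring_nf
    _ ≤ exp (-(4 * s ^ 2)) * (2 * exp ((2 * s) ^ 2 / 2)) := by gcongr; linarith
    _ = 2 * exp (-(2 * s ^ 2)) := by rw [mul_left_comm, ← exp_add]; ring_nf
    _ ≤ 2 := by
        have : exp (-(2 * s ^ 2)) ≤ 1 := exp_le_one_iff.2 (by nlinarith)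
        linarith

namespace IsFairCoinSeq

variable {Ω : Type*} [MeasurableSpace Ω] {μ : Measure Ω} {X : ℕ → Ω → ℝ}

lemma measureReal_inter_crossingEvent (hX : IsFairCoinSeq μ X) (x c b : ℝ) (N : ℕ) :
    μ.real ({ω | X 0 ω = x} ∩ crossingEvent (fun i ↦ X (i + 1)) c b N) =
      μ.real {ω | X 0 ω = x} * μ.real (crossingEvent (fun i ↦ X (i + 1)) c b N) := by
  have hhead : MeasurableSet[MeasurableSpace.comap (X 0) inferInstance] {ω | X 0 ω = x} :=
    ⟨{x}, measurableSet_singleton x, rfl⟩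
  have htail : MeasurableSet[⨆ i ∈ Set.Ioi 0, MeasurableSpace.comap (X i) inferInstance]
      (crossingEvent (fun i ↦ X (i + 1)) c b N) :=
    measurableSet_crossingEvent fun i ↦ Measurable.of_comap_le <|
      le_iSup₂ (f := fun j (_ : j ∈ Set.Ioi 0) ↦ MeasurableSpace.comap (X j) inferInstance)
        (i + 1) i.succ_pos
  simp only [measureReal_def, (Indep_iff _ _ _).1 hX.indep_head_tail _ _ hhead htail,
    ENNReal.toReal_mul]

/-- Ville's maximal inequality for the supermartingale `exp (l * (S_k - c * k))`, proved by
conditioning on the first flip. -/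
theorem measureReal_crossingEvent_le (hX : IsFairCoinSeq μ X) {c l : ℝ} (hl : 0 ≤ l)
    (hmgf : exp (l * (1 - c)) + exp (-(l * c)) ≤ 2) (N : ℕ) (b : ℝ) :
    μ.real (crossingEvent X c b N) ≤ exp (-(l * b)) := by
  have := hX.isProbabilityMeasure
  induction N generalizing X b with
  | zero =>
    rcases le_or_gt b 0 with hb | hb
    · exact measureReal_le_one.trans (one_le_exp (by nlinarith))
    · rw [crossingEvent_zero hb, measureReal_empty]
      positivity
  | succ N ih =>
    rcases le_or_gt b 0 with hb | hb
    · exact measureReal_le_one.trans (one_le_exp (by nlinarith))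
    set A := crossingEvent X c b (N + 1)
    have hcover : A ⊆ ({ω | X 0 ω = 1} ∩ A) ∪ ({ω | X 0 ω = 0} ∩ A) := fun ω hω ↦ by
      rcases hX.2.1 0 ω with h | h <;> simp [h, hω]
    have hexp : ∀ x, exp (-(l * (b - (x - c)))) = exp (-(l * b)) * exp (l * (x - c)) :=
      fun x ↦ by rw [← exp_add]; ring_nf
    calc μ.real A
        ≤ μ.real ({ω | X 0 ω = 1} ∩ A) + μ.real ({ω | X 0 ω = 0} ∩ A) :=
          (measureReal_mono hcover).trans (measureReal_union_le _ _)
      _ = 1 / 2 * μ.real (crossingEvent (fun i ↦ X (i + 1)) c (b - (1 - c)) N) +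
            1 / 2 * μ.real (crossingEvent (fun i ↦ X (i + 1)) c (b - (0 - c)) N) := by
          rw [inter_crossingEvent_succ hb, inter_crossingEvent_succ hb,
            hX.measureReal_inter_crossingEvent, hX.measureReal_inter_crossingEvent,
            hX.measureReal_heads, hX.measureReal_tails]
      _ ≤ 1 / 2 * exp (-(l * (b - (1 - c)))) + 1 / 2 * exp (-(l * (b - (0 - c)))) := by
          gcongr <;> exact ih hX.shift _
      _ = exp (-(l * b)) * ((exp (l * (1 - c)) + exp (-(l * c))) / 2) := by
          rw [hexp, hexp, zero_sub, mul_neg]; ring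
      _ ≤ exp (-(l * b)) := by
          apply mul_le_of_le_one_right (exp_nonneg _); linarith

theorem measureReal_exists_sum_ge_le (hX : IsFairCoinSeq μ X) {c l : ℝ} (hl : 0 ≤ l)
    (hmgf : exp (l * (1 - c)) + exp (-(l * c)) ≤ 2) (b : ℝ) :
    μ.real {ω | ∃ k, b ≤ ∑ i ∈ Finset.range k, (X i ω - c)} ≤ exp (-(l * b)) := by
  have := hX.isProbabilityMeasure
  rw [← iUnion_crossingEvent, measureReal_def, crossingEvent_mono.measure_iUnion]
  refine ENNReal.toReal_le_of_le_ofReal (exp_nonneg _) (iSup_le fun N ↦ ?_)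
  exact (ENNReal.le_ofReal_iff_toReal_le (measure_ne_top _ _) (exp_nonneg _)).2
    (hX.measureReal_crossingEvent_le hl hmgf N b)

theorem measureReal_lt_iSup_headsProp_le (hX : IsFairCoinSeq μ X) (a n : ℕ) {p : ℝ}
    (hp : 1 / 2 ≤ p) :
    μ.real {ω | p < ⨆ k, headsProp X a n k ω} ≤ exp (-(4 * (p - 1 / 2) * (p * n - a))) := by
  have := hX.isProbabilityMeasure
  refine (measureReal_mono fun ω (hω : p < _) ↦ ?_).trans <|
    hX.measureReal_exists_sum_ge_le (by linarith)
      (by simpa using exp_four_mul_add_exp_neg_four_mul_le_two (p - 1 / 2)) _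
  obtain ⟨k, hk⟩ := exists_lt_of_lt_ciSup hω
  rcases (show (0 : ℝ) ≤ n + k by positivity).eq_or_lt with h0 | hpos
  · rw [headsProp, ← h0, div_zero] at hk
    linarith
  rw [headsProp, lt_div_iff₀ hpos] at hk
  refine ⟨k, ?_⟩
  simp only [Finset.sum_sub_distrib, Finset.sum_const, Finset.card_range, nsmul_eq_mul]
  linarith

end IsFairCoinSeq

section HeadsProportion

variable {Ω : Type*} {X : ℕ → Ω → ℝ} {a n : ℕ}

lemma headsProp_mem_Icc (hX : ∀ i ω, X i ω = 0 ∨ X i ω = 1) (han : a ≤ n) (k : ℕ) (ω : Ω) :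
    headsProp X a n k ω ∈ Set.Icc 0 1 := by
  have h01 : ∀ i, X i ω ∈ Set.Icc 0 1 := fun i ↦ by rcases hX i ω with h | h <;> simp [h]
  have hsum0 : 0 ≤ ∑ i ∈ Finset.range k, X i ω := Finset.sum_nonneg fun i _ ↦ (h01 i).1
  have hsumk : ∑ i ∈ Finset.range k, X i ω ≤ k := by
    simpa using Finset.sum_le_sum fun i (_ : i ∈ Finset.range k) ↦ (h01 i).2
  have han' : (a : ℝ) ≤ n := by exact_mod_cast han
  exact ⟨by unfold headsProp; positivity, div_le_one_of_le₀ (by linarith) (by positivity)⟩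

lemma integrable_iSup_headsProp [MeasurableSpace Ω] {μ : Measure Ω} [IsFiniteMeasure μ]
    (hX : IsFairCoinSeq μ X) (han : a ≤ n) :
    Integrable (fun ω ↦ ⨆ k, headsProp X a n k ω) μ := by
  have hmeas : Measurable fun ω ↦ ⨆ k, headsProp X a n k ω := Measurable.iSup fun k ↦
    (measurable_const.add (Finset.measurable_sum _ fun i _ ↦ hX.1 i)).div_const _
  refine .of_bound hmeas.aestronglyMeasurable 1 (ae_of_all _ fun ω ↦ ?_)
  have hR := headsProp_mem_Icc hX.2.1 han (ω := ω)
  rw [Real.norm_of_nonneg (Real.iSup_nonneg fun k ↦ (hR k).1)]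
  exact ciSup_le fun k ↦ (hR k).2

end HeadsProportion

lemma integral_le_add_integral_measureReal_lt {Ω : Type*} [MeasurableSpace Ω] {μ : Measure Ω}
    [IsProbabilityMeasure μ] {G : Ω → ℝ} (hG : Integrable G μ) (M : ℝ) :
    ∫ ω, G ω ∂μ ≤ M + ∫ t in Set.Ioi 0, μ.real {ω | M + t < G ω} := by
  set F := fun ω ↦ max (G ω - M) 0
  have hF : Integrable F μ := (hG.sub (integrable_const M)).pos_part
  have hlevel : ∀ t ∈ Set.Ioi (0 : ℝ), {ω | t < F ω} = {ω | M + t < G ω} := fun t ht ↦ by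
    ext ω
    simp only [F, Set.mem_ofPred_eq, lt_max_iff]
    constructor
    · rintro (h | h) <;> linarith [Set.mem_Ioi.1 ht]
    · intro h; left; linarith
  calc ∫ ω, G ω ∂μ ≤ ∫ ω, (M + F ω) ∂μ :=
        integral_mono hG ((integrable_const M).add hF) fun ω ↦ by
          simp only [F]; linarith [le_max_left (G ω - M) 0]
    _ = M + ∫ t in Set.Ioi 0, μ.real {ω | t < F ω} := by
        rw [integral_add (integrable_const M) hF, integral_const, probReal_univ, one_smul,
          hF.integral_eq_integral_meas_lt (ae_of_all _ fun ω ↦ le_max_right _ _)]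
    _ = M + ∫ t in Set.Ioi 0, μ.real {ω | M + t < G ω} := by
        rw [setIntegral_congr_fun measurableSet_Ioi fun t ht ↦ by rw [hlevel t ht]]

section GaussianTail

variable {n c : ℝ}

lemma integrableOn_exp_neg_quadratic (hn : 0 < n) (hc : 0 ≤ c) :
    IntegrableOn (fun t ↦ exp (-(4 * n * t ^ 2 + 2 * c * t))) (Set.Ioi 0) := by
  refine (integrable_exp_neg_mul_sq (by positivity : 0 < 4 * n)).integrableOn.mono'
    (by fun_prop : Continuous _).aestronglyMeasurable
    ((ae_restrict_iff' measurableSet_Ioi).2 (ae_of_all _ fun t (ht : 0 < t) ↦ ?_))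
  rw [Real.norm_of_nonneg (exp_nonneg _), exp_le_exp]
  nlinarith

lemma integral_Ioi_exp_neg_quadratic (hn : 0 < n) :
    ∫ t in Set.Ioi 0, exp (-(4 * n * t ^ 2 + 2 * c * t)) =
      1 / (2 * √n) * ∫ u in Set.Ioi 0, exp (-u ^ 2 - c / √n * u) := by
  have hsqrt : 0 < √n := sqrt_pos.2 hn
  have hsubst : ∀ t, exp (-(4 * n * t ^ 2 + 2 * c * t)) =
      exp (-(2 * √n * t) ^ 2 - c / √n * (2 * √n * t)) := fun t ↦ by
    congr 1
    field_simp
    rw [sq_sqrt hn.le]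
    ring
  simp_rw [hsubst]
  rw [integral_comp_mul_left_Ioi (fun u ↦ exp (-u ^ 2 - c / √n * u)) 0 (by positivity),
    mul_zero, smul_eq_mul, one_div]

end GaussianTail

lemma four_mul_max_add_sub_half_mul_eq {a n : ℝ} (hn : 0 < n) (t : ℝ) :
    4 * (max (a / n) (1 / 2) + t - 1 / 2) * ((max (a / n) (1 / 2) + t) * n - a) =
      4 * n * t ^ 2 + 2 * |2 * a - n| * t := by
  rcases max_cases (a / n) (1 / 2) with ⟨hmax, hge⟩ | ⟨hmax, hlt⟩
  · rw [le_div_iff₀ hn] at hge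
    rw [hmax, abs_of_nonneg (by linarith)]
    field_simp
    ring
  · rw [div_lt_iff₀ hn] at hlt
    rw [hmax, abs_of_nonpos (by linarith)]
    ring

/-- `Ṽ(a,n) ≤ max(a/n, 1/2) + (1/(2√n))·∫₀^∞ exp(−u² − (|2a−n|/√n)·u) du`. -/
theorem clairvoyant_le_add_gaussian_integral {Ω : Type*} [MeasurableSpace Ω] (μ : Measure Ω)
    [IsProbabilityMeasure μ] (X : ℕ → Ω → ℝ) (hX : IsFairCoinSeq μ X)
    (a n : ℕ) (hn : 1 ≤ n) (han : a ≤ n) :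
    clairvoyantValue μ X a n ≤
      max ((a : ℝ) / n) (1 / 2) +
        (1 / (2 * Real.sqrt n)) *
          ∫ u in Set.Ioi (0 : ℝ),
            Real.exp (-u ^ 2 - (|2 * (a : ℝ) - n| / Real.sqrt n) * u) := by
  have hn' : (0 : ℝ) < n := by exact_mod_cast hn
  set M := max ((a : ℝ) / n) (1 / 2)
  have htail : ∀ t ∈ Set.Ioi (0 : ℝ), μ.real {ω | M + t < ⨆ k, headsProp X a n k ω} ≤
      exp (-(4 * n * t ^ 2 + 2 * |2 * (a : ℝ) - n| * t)) := fun t ht ↦ by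
    rw [← four_mul_max_add_sub_half_mul_eq hn']
    exact hX.measureReal_lt_iSup_headsProp_le a n
      (by linarith [le_max_right ((a : ℝ) / n) (1 / 2), Set.mem_Ioi.1 ht])
  calc clairvoyantValue μ X a n
      ≤ M + ∫ t in Set.Ioi 0, μ.real {ω | M + t < ⨆ k, headsProp X a n k ω} :=
        integral_le_add_integral_measureReal_lt (integrable_iSup_headsProp hX han) M
    _ ≤ M + ∫ t in Set.Ioi 0, exp (-(4 * n * t ^ 2 + 2 * |2 * (a : ℝ) - n| * t)) :=
        add_le_add_right (integral_mono_of_nonneg (ae_of_all _ fun _ ↦ measureReal_nonneg)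
          (integrableOn_exp_neg_quadratic hn' (abs_nonneg _))
          ((ae_restrict_iff' measurableSet_Ioi).2 (ae_of_all _ htail))) M
    _ = _ := by rw [integral_Ioi_exp_neg_quadratic hn']
end

section
/- For every position (a,n), the optimal value of the Chow–Robbins game satisfies the backward recursion V(a,n) = max(a/n, (V(a, n+1) + V(a+1, n+1))/2). -/
open MeasureTheory ProbabilityTheory Real

/-- The natural filtration of the coin flips: `coinFiltration X k` is the σ-algebra
generated by the first `k` future flips `X 0, …, X (k-1)`. -/
def coinFiltration {Ω : Type*} (X : ℕ → Ω → ℝ) (k : ℕ) : MeasurableSpace Ω :=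
  ⨆ i ∈ Finset.range k, MeasurableSpace.comap (X i) inferInstance

/-- `τ` is an almost surely finite stopping time with respect to the natural
filtration of the coin flips. -/
def IsAEFiniteStoppingTime {Ω : Type*} [MeasurableSpace Ω] (μ : Measure Ω)
    (X : ℕ → Ω → ℝ) (τ : Ω → ℕ∞) : Prop :=
  (∀ k : ℕ, MeasurableSet[coinFiltration X k] {ω | τ ω ≤ (k : ℕ∞)}) ∧
  μ {ω | τ ω = ⊤} = 0

/-- The optimal value `V(a,n)`: the supremum, over all almost surely finite stopping
times `τ` for the natural filtration of the flips, of the expected payoff `E[R_τ]`. -/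
noncomputable def gameValue {Ω : Type*} [MeasurableSpace Ω] (μ : Measure Ω)
    (X : ℕ → Ω → ℝ) (a n : ℕ) : ℝ :=
  ⨆ τ : {τ : Ω → ℕ∞ // IsAEFiniteStoppingTime μ X τ},
    ∫ ω, headsProp X a n ((τ.1 ω).toNat) ω ∂μ

/-!
A stopping time of the coin flips is the same thing as a stopping rule `r : List Bool → Prop`,
"stop as soon as the word of flips seen so far satisfies `r`": a rule gives its hitting time, and
a stopping time `τ` is the hitting time of the rule `stopRule X τ`, because `{τ ≤ k}` is decided by
the first `k` flips. A rule stops at the prefix-free set of words `stopWords r`, and the cylinder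
of a word `s` has probability `2⁻¹ ^ |s|`; so the probability of stopping and the expected payoff
are the series `stopMass r` and `stopPayoff a n r`, which no longer refer to the probability
space, and `V(a,n)` is the supremum of the set `payoffs a n` of payoffs of the rules of mass one.

A rule either stops at once, with payoff `a/n`, or is `consRule R`: read one flip `b`, then follow
`R b`. The payoff of `consRule R` is the average of the payoffs of `R false` from `(a, n+1)` and of
`R true` from `(a+1, n+1)`, and its mass is the average of their masses, which are at most one.
Hence `payoffs a n = {a/n} ∪ 2⁻¹ • (payoffs a (n+1) + payoffs (a+1) (n+1))`, and taking suprema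
gives the recursion.
-/

namespace ChowRobbins

open scoped Pointwise

variable {Ω : Type*} {X : ℕ → Ω → ℝ}

noncomputable def firstFlips (X : ℕ → Ω → ℝ) (k : ℕ) (ω : Ω) : List Bool :=
  List.ofFn fun i : Fin k => decide (X i ω = 1)

@[simp] lemma length_firstFlips (k : ℕ) (ω : Ω) : (firstFlips X k ω).length = k := by
  simp [firstFlips]

lemma take_firstFlips {j k : ℕ} (h : j ≤ k) (ω : Ω) :
    (firstFlips X k ω).take j = firstFlips X j ω := by
  apply List.ext_getElem (by simp [h])
  intro i _ hi
  simp [firstFlips]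

lemma firstFlips_eq_iff {k : ℕ} {s : List Bool} (hs : s.length = k) {ω : Ω} :
    firstFlips X k ω = s ↔ ∀ i ∈ Finset.range k, decide (X i ω = 1) = s.getD i false := by
  subst hs
  simp +contextual [firstFlips, List.ext_getElem_iff, List.getD_eq_getElem?_getD]

lemma sum_range_eq_count_firstFlips (h01 : ∀ i ω, X i ω = 0 ∨ X i ω = 1) (k : ℕ) (ω : Ω) :
    ∑ i ∈ Finset.range k, X i ω = (firstFlips X k ω).count true := by
  induction k with
  | zero => simp [firstFlips]
  | succ k ih =>
    rw [Finset.sum_range_succ, ih, firstFlips, firstFlips, List.ofFn_succ_last, List.count_append]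
    rcases h01 k ω with h | h <;> simp [h]

def cylinder (X : ℕ → Ω → ℝ) (s : List Bool) : Set Ω := firstFlips X s.length ⁻¹' {s}

lemma mem_cylinder {s : List Bool} {ω : Ω} : ω ∈ cylinder X s ↔ firstFlips X s.length ω = s :=
  Iff.rfl

noncomputable def headsRatio (a n : ℕ) (s : List Bool) : ℝ :=
  ((a : ℝ) + s.count true) / ((n : ℝ) + s.length)

lemma headsProp_eq_headsRatio (h01 : ∀ i ω, X i ω = 0 ∨ X i ω = 1) (a n k : ℕ) (ω : Ω) :
    headsProp X a n k ω = headsRatio a n (firstFlips X k ω) := by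
  rw [headsProp, headsRatio, sum_range_eq_count_firstFlips h01, length_firstFlips]

lemma headsRatio_nonneg (a n : ℕ) (s : List Bool) : 0 ≤ headsRatio a n s := by
  unfold headsRatio; positivity

lemma headsRatio_le (a n : ℕ) (s : List Bool) : headsRatio a n s ≤ a + 1 := by
  have hcount : (s.count true : ℝ) ≤ s.length := by exact_mod_cast List.count_le_length
  rw [headsRatio, add_div]
  gcongr
  · rcases Nat.eq_zero_or_pos (n + s.length) with h | h
    · simp_all
    · exact div_le_self (by positivity) (by exact_mod_cast h)
  · exact div_le_one_of_le₀ (by linarith) (by positivity)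

lemma norm_headsProp_le (h01 : ∀ i ω, X i ω = 0 ∨ X i ω = 1) (a n k : ℕ) (ω : Ω) :
    ‖headsProp X a n k ω‖ ≤ a + 1 := by
  rw [headsProp_eq_headsRatio h01, Real.norm_of_nonneg (headsRatio_nonneg ..)]
  exact headsRatio_le ..

lemma headsRatio_cons_false (a n : ℕ) (s : List Bool) :
    headsRatio a n (false :: s) = headsRatio a (n + 1) s := by
  simp [headsRatio]; ring_nf

lemma headsRatio_cons_true (a n : ℕ) (s : List Bool) :
    headsRatio a n (true :: s) = headsRatio (a + 1) (n + 1) s := by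
  simp [headsRatio]; ring_nf

def stopWords (r : List Bool → Prop) : Set (List Bool) :=
  {s | r s ∧ ∀ k < s.length, ¬ r (s.take k)}

open Classical in
noncomputable def hittingTime (X : ℕ → Ω → ℝ) (r : List Bool → Prop) (ω : Ω) : ℕ∞ :=
  if h : ∃ j, r (firstFlips X j ω) then (Nat.find h : ℕ∞) else ⊤

lemma hittingTime_le_iff {r : List Bool → Prop} {ω : Ω} {k : ℕ} :
    hittingTime X r ω ≤ k ↔ ∃ j ≤ k, r (firstFlips X j ω) := by
  unfold hittingTime
  split_ifs with h
  · simp [Nat.find_le_iff]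
  · push Not at h
    simp [h]

lemma hittingTime_eq_iff {r : List Bool → Prop} {ω : Ω} {k : ℕ} :
    hittingTime X r ω = k ↔ firstFlips X k ω ∈ stopWords r := by
  unfold hittingTime
  split_ifs with h
  · simp only [Nat.cast_inj, Nat.find_eq_iff, stopWords, Set.mem_ofPred_eq, length_firstFlips]
    refine and_congr_right fun _ => forall₂_congr fun j hj => ?_
    rw [take_firstFlips hj.le]
  · push Not at h
    simp [h, stopWords]

lemma hittingTime_eq_length {r : List Bool → Prop} {s : List Bool} (hs : s ∈ stopWords r)
    {ω : Ω} (hω : ω ∈ cylinder X s) : hittingTime X r ω = s.length := by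
  rwa [hittingTime_eq_iff, mem_cylinder.1 hω]

lemma setOf_hittingTime_ne_top (r : List Bool → Prop) :
    {ω | hittingTime X r ω ≠ ⊤} = ⋃ s : stopWords r, cylinder X s := by
  ext ω
  simp only [Set.mem_ofPred_eq, ENat.ne_top_iff_exists, Set.mem_iUnion, Subtype.exists, eq_comm,
    hittingTime_eq_iff]
  constructor
  · rintro ⟨k, hk⟩
    exact ⟨_, hk, by simp [cylinder]⟩
  · rintro ⟨s, hs, hω⟩
    exact ⟨s.length, by rwa [mem_cylinder.1 hω]⟩

lemma pairwise_disjoint_cylinder_stopWords (r : List Bool → Prop) :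
    Pairwise (Function.onFun Disjoint fun s : stopWords r => cylinder X s) := by
  intro s t hst
  refine Set.disjoint_left.2 fun ω hs ht => hst (Subtype.ext ?_)
  have hlen : s.1.length = t.1.length := by
    exact_mod_cast (hittingTime_eq_length s.2 hs).symm.trans (hittingTime_eq_length t.2 ht)
  rw [← mem_cylinder.1 hs, ← mem_cylinder.1 ht, hlen]

noncomputable def stopMass (r : List Bool → Prop) : ℝ :=
  ∑' s : stopWords r, (2⁻¹ : ℝ) ^ s.1.length

noncomputable def stopPayoff (a n : ℕ) (r : List Bool → Prop) : ℝ :=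
  ∑' s : stopWords r, (2⁻¹ : ℝ) ^ s.1.length * headsRatio a n s

lemma stopWords_of_nil {r : List Bool → Prop} (h : r []) : stopWords r = {[]} := by
  ext s
  refine ⟨fun hs => ?_, by rintro rfl; exact ⟨h, by simp⟩⟩
  by_contra hne
  exact hs.2 0 (List.length_pos_iff.2 hne) (by simpa using h)

lemma stopMass_of_nil {r : List Bool → Prop} (h : r []) : stopMass r = 1 := by
  rw [stopMass, stopWords_of_nil h, tsum_singleton [] fun s => (2⁻¹ : ℝ) ^ s.length]
  simp

lemma stopPayoff_of_nil (a n : ℕ) {r : List Bool → Prop} (h : r []) :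
    stopPayoff a n r = a / n := by
  rw [stopPayoff, stopWords_of_nil h,
    tsum_singleton [] fun s => (2⁻¹ : ℝ) ^ s.length * headsRatio a n s]
  simp [headsRatio]

def consRule (R : Bool → List Bool → Prop) : List Bool → Prop
  | [] => False
  | b :: t => R b t

lemma consRule_tail {r : List Bool → Prop} (h : ¬ r []) : consRule (fun b t => r (b :: t)) = r := by
  funext s
  cases s <;> simp [consRule, h]

lemma cons_mem_stopWords_consRule {R : Bool → List Bool → Prop} {b : Bool} {t : List Bool} :
    b :: t ∈ stopWords (consRule R) ↔ t ∈ stopWords (R b) := by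
  simp only [stopWords, Set.mem_ofPred_eq, List.length_cons, Nat.forall_lt_succ_left,
    List.take_zero, List.take_succ_cons, consRule, not_false_eq_true, true_and]

def stopWordsConsRuleEquiv (R : Bool → List Bool → Prop) :
    (Σ b, stopWords (R b)) ≃ stopWords (consRule R) where
  toFun p := ⟨p.1 :: p.2, cons_mem_stopWords_consRule.2 p.2.2⟩
  invFun
    | ⟨b :: t, h⟩ => ⟨b, t, cons_mem_stopWords_consRule.1 h⟩
    | ⟨[], h⟩ => h.1.elim
  left_inv _ := rfl
  right_inv
    | ⟨_ :: _, _⟩ => rfl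
    | ⟨[], h⟩ => h.1.elim

lemma tsum_stopWords_consRule (R : Bool → List Bool → Prop) (f : List Bool → ℝ)
    (hf : Summable fun s : stopWords (consRule R) => f s) :
    ∑' s : stopWords (consRule R), f s =
      ∑' t : stopWords (R false), f (false :: t) + ∑' t : stopWords (R true), f (true :: t) := by
  have hf' : Summable fun p => f (stopWordsConsRuleEquiv R p) :=
    (stopWordsConsRuleEquiv R).summable_iff.2 hf
  rw [← (stopWordsConsRuleEquiv R).tsum_eq, hf'.tsum_sigma, tsum_fintype, Fintype.sum_bool,
    add_comm]
  rfl

lemma measurableSet_decide_eq_one (b : Bool) : MeasurableSet {x : ℝ | decide (x = 1) = b} := by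
  cases b
  · convert (measurableSet_singleton (1 : ℝ)).compl using 1; ext; simp
  · convert measurableSet_singleton (1 : ℝ) using 1; ext; simp

lemma preimage_firstFlips_singleton {k : ℕ} {s : List Bool} (hs : s.length = k) :
    firstFlips X k ⁻¹' {s} =
      ⋂ i ∈ Finset.range k, X i ⁻¹' {x | decide (x = 1) = s.getD i false} := by
  ext ω; simp [firstFlips_eq_iff hs]

lemma comap_le_coinFiltration {i k : ℕ} (h : i < k) :
    MeasurableSpace.comap (X i) inferInstance ≤ coinFiltration X k :=
  le_iSup₂ (f := fun i (_ : i ∈ Finset.range k) => MeasurableSpace.comap (X i) inferInstance) i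
    (Finset.mem_range.2 h)

lemma measurableSet_preimage_firstFlips (k : ℕ) (S : Set (List Bool)) :
    MeasurableSet[coinFiltration X k] (firstFlips X k ⁻¹' S) := by
  rw [← Set.biUnion_preimage_singleton]
  refine MeasurableSet.biUnion S.to_countable fun s _ => ?_
  by_cases hs : s.length = k
  · rw [preimage_firstFlips_singleton hs]
    exact .biInter (Finset.countable_toSet _) fun i hi => comap_le_coinFiltration
      (Finset.mem_range.1 hi) _ ⟨_, measurableSet_decide_eq_one _, rfl⟩
  · rw [Set.preimage_singleton_eq_empty.2 fun ⟨ω, hω⟩ => hs (hω ▸ length_firstFlips k ω)]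
    exact (coinFiltration X k).measurableSet_empty

lemma coinFiltration_le_comap (k : ℕ) :
    coinFiltration X k ≤ MeasurableSpace.comap (fun ω (i : Fin k) => X i ω) ⊤ := by
  refine iSup₂_le fun i hi => ?_
  rw [show X i = (fun v : Fin k → ℝ => v ⟨i, Finset.mem_range.1 hi⟩) ∘ (fun ω (i : Fin k) => X i ω)
    from rfl, ← MeasurableSpace.comap_comp]
  exact MeasurableSpace.comap_mono le_top

lemma flip_eq_of_firstFlips_eq (h01 : ∀ i ω, X i ω = 0 ∨ X i ω = 1) {k : ℕ} {ω ω' : Ω}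
    (h : firstFlips X k ω = firstFlips X k ω') {i : ℕ} (hi : i < k) : X i ω = X i ω' := by
  have hi' := congrArg (·[i]?) h
  simp only [firstFlips, List.getElem?_ofFn, hi, dite_true, Option.some.injEq,
    decide_eq_decide] at hi'
  rcases h01 i ω with h | h <;> rcases h01 i ω' with h' | h' <;> simp_all

lemma mem_of_firstFlips_eq (h01 : ∀ i ω, X i ω = 0 ∨ X i ω = 1) {k : ℕ} {A : Set Ω}
    (hA : MeasurableSet[coinFiltration X k] A) {ω ω' : Ω}
    (h : firstFlips X k ω = firstFlips X k ω') (hω : ω ∈ A) : ω' ∈ A := by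
  obtain ⟨B, -, rfl⟩ := coinFiltration_le_comap k A hA
  rw [Set.mem_preimage] at hω ⊢
  convert hω using 1
  funext i
  exact (flip_eq_of_firstFlips_eq h01 h i.2).symm

def stopRule (X : ℕ → Ω → ℝ) (τ : Ω → ℕ∞) (s : List Bool) : Prop :=
  ∃ ω, τ ω ≤ s.length ∧ firstFlips X s.length ω = s

lemma hittingTime_stopRule (h01 : ∀ i ω, X i ω = 0 ∨ X i ω = 1) {τ : Ω → ℕ∞}
    (hτ : ∀ k : ℕ, MeasurableSet[coinFiltration X k] {ω | τ ω ≤ k}) :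
    hittingTime X (stopRule X τ) = τ := by
  funext ω
  refine eq_of_forall_ge_iff fun c => ?_
  induction c using ENat.recTopCoe with
  | top => simp
  | coe k =>
    rw [hittingTime_le_iff]
    constructor
    · rintro ⟨j, hjk, ω', hω'j, hω'ω⟩
      -- `{τ ≤ j}` is decided by the first `j` flips, on which `ω'` and `ω` agree.
      simp only [length_firstFlips] at hω'j hω'ω
      exact (mem_of_firstFlips_eq h01 (hτ j) hω'ω hω'j).trans (by exact_mod_cast hjk)
    · exact fun h => ⟨k, le_rfl, ω, by simpa using h, by simp⟩

section Measure

variable [MeasurableSpace Ω]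

lemma coinFiltration_le (hm : ∀ i, Measurable (X i)) (k : ℕ) :
    coinFiltration X k ≤ ‹MeasurableSpace Ω› :=
  iSup₂_le fun i _ => (hm i).comap_le

lemma measurableSet_cylinder (hm : ∀ i, Measurable (X i)) (s : List Bool) :
    MeasurableSet (cylinder X s) :=
  coinFiltration_le hm _ _ (measurableSet_preimage_firstFlips _ _)

lemma measurable_hittingTime (hm : ∀ i, Measurable (X i)) (r : List Bool → Prop) :
    Measurable (hittingTime X r) := by
  refine ENat.measurable_iff.2 fun k => ?_
  have : hittingTime X r ⁻¹' {(k : ℕ∞)} = firstFlips X k ⁻¹' stopWords r := by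
    ext; simp [hittingTime_eq_iff]
  rw [this]
  exact coinFiltration_le hm k _ (measurableSet_preimage_firstFlips k _)

lemma measurable_headsProp (hm : ∀ i, Measurable (X i)) (a n k : ℕ) :
    Measurable (headsProp X a n k) :=
  ((Finset.measurable_sum _ fun i _ => hm i).const_add _).div_const _

lemma measurable_headsProp_hittingTime (hm : ∀ i, Measurable (X i)) (a n : ℕ)
    (r : List Bool → Prop) : Measurable fun ω => headsProp X a n (hittingTime X r ω).toNat ω := by
  have hF : Measurable fun p : ℕ × Ω => headsProp X a n p.1 p.2 :=
    measurable_from_prod_countable_right fun k => measurable_headsProp hm a n k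
  have hτ : Measurable fun ω => (hittingTime X r ω).toNat :=
    (Measurable.of_discrete (f := ENat.toNat)).comp (measurable_hittingTime hm r)
  exact hF.comp (hτ.prodMk measurable_id)

lemma tsum_measure_cylinder (hm : ∀ i, Measurable (X i)) (μ : Measure Ω) (r : List Bool → Prop) :
    ∑' s : stopWords r, μ (cylinder X s) = μ {ω | hittingTime X r ω ≠ ⊤} := by
  rw [setOf_hittingTime_ne_top,
    measure_iUnion (pairwise_disjoint_cylinder_stopWords r) fun s => measurableSet_cylinder hm s]

variable {μ : Measure Ω} [IsProbabilityMeasure μ]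

lemma measure_flip (hX : IsFairCoinSeq μ X) (i : ℕ) (b : Bool) :
    μ (X i ⁻¹' {x | decide (x = 1) = b}) = 2⁻¹ := by
  have heads : μ (X i ⁻¹' {1}) = 2⁻¹ := by rw [← one_div]; exact hX.2.2.1 i
  cases b
  · have : X i ⁻¹' {x | decide (x = 1) = false} = (X i ⁻¹' {1})ᶜ := by ext; simp
    rw [this, measure_compl ((hX.1 i) (measurableSet_singleton 1)) (measure_ne_top μ _), heads,
      measure_univ, ENNReal.one_sub_inv_two]
  · simpa using heads

lemma measure_cylinder (hX : IsFairCoinSeq μ X) (s : List Bool) :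
    μ (cylinder X s) = 2⁻¹ ^ s.length := by
  rw [cylinder, preimage_firstFlips_singleton rfl,
    hX.2.2.2.meas_biInter fun i _ => ⟨_, measurableSet_decide_eq_one _, rfl⟩,
    Finset.prod_congr rfl fun i _ => measure_flip hX i _]
  simp

/-- Kraft's inequality for the prefix-free set `stopWords r`, via the cylinders of a fair coin. -/
lemma hasSum_measureReal_hittingTime_ne_top (hX : IsFairCoinSeq μ X)
    (r : List Bool → Prop) :
    HasSum (fun s : stopWords r => (2⁻¹ : ℝ) ^ s.1.length)
      (μ.real {ω | hittingTime X r ω ≠ ⊤}) := by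
  have hsum := tsum_measure_cylinder hX.1 μ r
  have hfin : ∑' s : stopWords r, μ (cylinder X s) ≠ ⊤ := hsum ▸ measure_ne_top μ _
  convert ENNReal.hasSum_toReal hfin using 1
  · simp [measure_cylinder hX]
  · rw [measureReal_def, ← hsum, ENNReal.tsum_toReal_eq fun s => ne_top_of_le_ne_top hfin
      (ENNReal.le_tsum s)]

lemma stopMass_eq_measureReal (hX : IsFairCoinSeq μ X) (r : List Bool → Prop) :
    stopMass r = μ.real {ω | hittingTime X r ω ≠ ⊤} :=
  (hasSum_measureReal_hittingTime_ne_top hX r).tsum_eq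

lemma stopMass_le_one (hX : IsFairCoinSeq μ X) (r : List Bool → Prop) : stopMass r ≤ 1 :=
  stopMass_eq_measureReal hX r ▸ measureReal_le_one

lemma stopMass_eq_one_iff (hX : IsFairCoinSeq μ X) (r : List Bool → Prop) :
    stopMass r = 1 ↔ μ {ω | hittingTime X r ω = ⊤} = 0 := by
  have hA : MeasurableSet {ω | hittingTime X r ω ≠ ⊤} :=
    measurable_hittingTime hX.1 r (measurableSet_singleton ⊤).compl
  rw [stopMass_eq_measureReal hX, measureReal_def, ENNReal.toReal_eq_one_iff,
    ← prob_compl_eq_zero_iff hA]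
  simp only [Set.compl_ofPred, not_not]

lemma summable_stopPayoff (hX : IsFairCoinSeq μ X) (a n : ℕ) (r : List Bool → Prop) :
    Summable fun s : stopWords r => (2⁻¹ : ℝ) ^ s.1.length * headsRatio a n s :=
  .of_nonneg_of_le (fun s => mul_nonneg (by positivity) (headsRatio_nonneg a n s))
    (fun s => by rw [mul_comm ((a : ℝ) + 1)]; gcongr; exact headsRatio_le a n s)
    ((hasSum_measureReal_hittingTime_ne_top hX r).summable.mul_left ((a : ℝ) + 1))

lemma stopPayoff_le (hX : IsFairCoinSeq μ X) (a n : ℕ) (r : List Bool → Prop) :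
    stopPayoff a n r ≤ (a + 1) * stopMass r := by
  rw [stopPayoff, stopMass, ← tsum_mul_left]
  refine (summable_stopPayoff hX a n r).tsum_le_tsum (fun s => ?_)
    ((hasSum_measureReal_hittingTime_ne_top hX r).summable.mul_left _)
  rw [mul_comm ((a : ℝ) + 1)]; gcongr; exact headsRatio_le a n s

lemma stopMass_consRule (hX : IsFairCoinSeq μ X) (R : Bool → List Bool → Prop) :
    stopMass (consRule R) = (stopMass (R false) + stopMass (R true)) / 2 := by
  rw [stopMass, tsum_stopWords_consRule R (fun s => (2⁻¹ : ℝ) ^ s.length)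
    (hasSum_measureReal_hittingTime_ne_top hX _).summable, stopMass, stopMass]
  simp only [List.length_cons, pow_succ, tsum_mul_right]
  ring

lemma stopPayoff_consRule (hX : IsFairCoinSeq μ X) (a n : ℕ) (R : Bool → List Bool → Prop) :
    stopPayoff a n (consRule R) =
      (stopPayoff a (n + 1) (R false) + stopPayoff (a + 1) (n + 1) (R true)) / 2 := by
  rw [stopPayoff, tsum_stopWords_consRule R (fun s => (2⁻¹ : ℝ) ^ s.length * headsRatio a n s)
    (summable_stopPayoff hX a n _)]
  simp only [List.length_cons, pow_succ, headsRatio_cons_false, headsRatio_cons_true,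
    mul_right_comm _ (2⁻¹ : ℝ), tsum_mul_right, stopPayoff]
  ring

lemma integral_headsProp_hittingTime (hX : IsFairCoinSeq μ X) (a n : ℕ) {r : List Bool → Prop}
    (hr : stopMass r = 1) :
    ∫ ω, headsProp X a n (hittingTime X r ω).toNat ω ∂μ = stopPayoff a n r := by
  set f := fun ω => headsProp X a n (hittingTime X r ω).toNat ω
  have hf : Integrable f μ :=
    .of_bound (measurable_headsProp_hittingTime hX.1 a n r).aestronglyMeasurable (a + 1)
      (.of_forall fun ω => norm_headsProp_le hX.2.1 ..)
  have hae : ∀ᵐ ω ∂μ, ω ∈ ⋃ s : stopWords r, cylinder X s := by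
    rw [← setOf_hittingTime_ne_top, ae_iff]
    simpa using (stopMass_eq_one_iff hX r).1 hr
  calc ∫ ω, f ω ∂μ = ∫ ω in ⋃ s : stopWords r, cylinder X s, f ω ∂μ := by
        rw [Measure.restrict_eq_self_of_ae_mem hae]
    _ = ∑' s : stopWords r, ∫ ω in cylinder X s, f ω ∂μ :=
        integral_iUnion (fun s => measurableSet_cylinder hX.1 s)
          (pairwise_disjoint_cylinder_stopWords r) hf.integrableOn
    _ = ∑' s : stopWords r, ∫ _ in cylinder X s, headsRatio a n s ∂μ := by
        refine tsum_congr fun s => setIntegral_congr_fun (measurableSet_cylinder hX.1 s)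
          fun ω hω => ?_
        simp only [f, hittingTime_eq_length s.2 hω, ENat.toNat_natCast,
          headsProp_eq_headsRatio hX.2.1, mem_cylinder.1 hω]
    _ = stopPayoff a n r := by
        simp [measureReal_def, measure_cylinder hX, stopPayoff]

lemma isAEFiniteStoppingTime_hittingTime (hX : IsFairCoinSeq μ X) {r : List Bool → Prop}
    (hr : stopMass r = 1) : IsAEFiniteStoppingTime μ X (hittingTime X r) := by
  refine ⟨fun k => ?_, (stopMass_eq_one_iff hX r).1 hr⟩
  have : {ω | hittingTime X r ω ≤ k} = firstFlips X k ⁻¹' {s | ∃ j ≤ k, r (s.take j)} := by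
    ext ω
    simp only [Set.mem_ofPred_eq, Set.mem_preimage, hittingTime_le_iff]
    exact exists_congr fun j => and_congr_right fun hj => by rw [take_firstFlips hj]
  rw [this]
  exact measurableSet_preimage_firstFlips k _

def payoffs (a n : ℕ) : Set ℝ := stopPayoff a n '' {r | stopMass r = 1}

lemma gameValue_eq_sSup_payoffs (hX : IsFairCoinSeq μ X) (a n : ℕ) :
    gameValue μ X a n = sSup (payoffs a n) := by
  rw [gameValue, ← sSup_range]
  congr 1
  ext x
  constructor
  · rintro ⟨⟨τ, hτ, hτfin⟩, rfl⟩
    have hτr := hittingTime_stopRule hX.2.1 hτ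
    have hr : stopMass (stopRule X τ) = 1 := (stopMass_eq_one_iff hX _).2 (by rwa [hτr])
    exact ⟨_, hr, by rw [← integral_headsProp_hittingTime hX a n hr, hτr]⟩
  · rintro ⟨r, hr, rfl⟩
    exact ⟨⟨_, isAEFiniteStoppingTime_hittingTime hX hr⟩, integral_headsProp_hittingTime hX a n hr⟩

lemma stopMass_consRule_eq_one_iff (hX : IsFairCoinSeq μ X) {R : Bool → List Bool → Prop} :
    stopMass (consRule R) = 1 ↔ stopMass (R false) = 1 ∧ stopMass (R true) = 1 := by
  have hle₀ := stopMass_le_one hX (R false)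
  have hle₁ := stopMass_le_one hX (R true)
  rw [stopMass_consRule hX]
  constructor
  · intro h; constructor <;> linarith
  · rintro ⟨h₀, h₁⟩; rw [h₀, h₁]; norm_num

lemma div_mem_payoffs (a n : ℕ) : (a : ℝ) / n ∈ payoffs a n :=
  ⟨fun _ => True, stopMass_of_nil trivial, stopPayoff_of_nil a n trivial⟩

lemma payoffs_eq (hX : IsFairCoinSeq μ X) (a n : ℕ) :
    payoffs a n =
      insert ((a : ℝ) / n) ((2⁻¹ : ℝ) • (payoffs a (n + 1) + payoffs (a + 1) (n + 1))) := by
  refine subset_antisymm ?_ (Set.insert_subset (div_mem_payoffs a n) ?_)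
  · rintro _ ⟨r, hr : stopMass r = 1, rfl⟩
    by_cases h : r []
    · exact .inl (stopPayoff_of_nil a n h)
    rw [← consRule_tail h] at hr ⊢
    obtain ⟨h₀, h₁⟩ := (stopMass_consRule_eq_one_iff hX).1 hr
    refine .inr (Set.mem_smul_set.2 ⟨_, Set.add_mem_add ⟨_, h₀, rfl⟩ ⟨_, h₁, rfl⟩, ?_⟩)
    rw [stopPayoff_consRule hX, smul_eq_mul, inv_mul_eq_div]
  · rintro _ ⟨_, ⟨_, ⟨r₀, h₀ : stopMass r₀ = 1, rfl⟩, _, ⟨r₁, h₁ : stopMass r₁ = 1, rfl⟩, rfl⟩, rfl⟩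
    refine ⟨consRule fun b => cond b r₁ r₀, (stopMass_consRule_eq_one_iff hX).2 ⟨h₀, h₁⟩, ?_⟩
    rw [stopPayoff_consRule hX]
    simp only [cond_false, cond_true, smul_eq_mul]
    ring

lemma bddAbove_payoffs (hX : IsFairCoinSeq μ X) (a n : ℕ) : BddAbove (payoffs a n) := by
  refine ⟨a + 1, ?_⟩
  rintro _ ⟨r, hr : stopMass r = 1, rfl⟩
  simpa [hr] using stopPayoff_le hX a n r

end Measure

end ChowRobbins

open ChowRobbins

theorem gameValue_recursion_general {Ω : Type*} [MeasurableSpace Ω] (μ : Measure Ω)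
    [IsProbabilityMeasure μ] (X : ℕ → Ω → ℝ) (hX : IsFairCoinSeq μ X)
    (a n : ℕ) :
    gameValue μ X a n =
      max ((a : ℝ) / n) ((gameValue μ X a (n + 1) + gameValue μ X (a + 1) (n + 1)) / 2) := by
  have hne : ∀ a n, (payoffs a n).Nonempty := fun a n => ⟨_, div_mem_payoffs a n⟩
  have hbdd := bddAbove_payoffs hX a n
  simp only [gameValue_eq_sSup_payoffs hX]
  rw [payoffs_eq hX a n] at hbdd ⊢
  rw [csSup_insert (bddAbove_insert.1 hbdd) ((hne _ _).add (hne _ _)).smul_set,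
    Real.sSup_smul_of_nonneg (by norm_num), csSup_add (hne _ _) (bddAbove_payoffs hX _ _)
    (hne _ _) (bddAbove_payoffs hX _ _), smul_eq_mul, inv_mul_eq_div]

/-- The backward recursion `V(a,n) = max(a/n, (V(a,n+1) + V(a+1,n+1))/2)`. -/
theorem gameValue_recursion {Ω : Type*} [MeasurableSpace Ω] (μ : Measure Ω)
    [IsProbabilityMeasure μ] (X : ℕ → Ω → ℝ) (hX : IsFairCoinSeq μ X)
    (a n : ℕ) (hn : 1 ≤ n) (han : a ≤ n) :
    gameValue μ X a n =
      max ((a : ℝ) / n) ((gameValue μ X a (n + 1) + gameValue μ X (a + 1) (n + 1)) / 2) :=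
  gameValue_recursion_general μ X hX a n
end

section
/- In the Chow–Robbins game, at a fixed difference between the number of heads and the number of tails, continuing being optimal is upward-closed in the number of flips: if (a,n) and (a',n') are positions with 2a − n = 2a' − n' and n ≤ n', and if V(a,n) > a/n (continuing is strictly better than stopping at (a,n)), then V(a',n') > a'/n'. Equivalently, for each fixed difference d = 2a − n, there is a threshold such that stopping is optimal exactly when the total number of flips is below it. -/
open MeasureTheory ProbabilityTheory Real

/-! Write `d = 2a - n`. After `k` more flips, `R_k - 1/2 = (d + W_k) / (2 (n + k))`, where `W` is
the simple random walk of the new flips, so whether `R_k ≥ 1/2` depends on `d` but not on `n`.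
Take a stopping time `τ` that beats stopping at `(a, n)`, and keep flipping after `τ` until
`R ≥ 1/2`. This can only raise the payoff, and it stops almost surely: `W` is a martingale with
increments `±1`, so it cannot converge, and by the one-sided martingale bound it is then a.s.
unbounded above. Where it stops,
`n (R_k - 1/2) ≤ n' (R'_k - 1/2)` because `n / (n + k) ≤ n' / (n' + k)`; taking expectations,
the same stopping time beats stopping at `(a', n')`. -/

open Filter Set

namespace FairCoin

section Pathwise

variable {Ω : Type*} {X : ℕ → Ω → ℝ}

variable (X) in
noncomputable def walk (k : ℕ) (ω : Ω) : ℝ := ∑ i ∈ Finset.range k, (2 * X i ω - 1)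

lemma walk_succ_sub (k : ℕ) (ω : Ω) : walk X (k + 1) ω - walk X k ω = 2 * X k ω - 1 := by
  rw [walk, walk, Finset.sum_range_succ, add_sub_cancel_left]

lemma walk_eq (k : ℕ) (ω : Ω) : walk X k ω = 2 * ∑ i ∈ Finset.range k, X i ω - k := by
  simp [walk, Finset.sum_sub_distrib, Finset.mul_sum]

lemma abs_two_mul_sub_one (h01 : ∀ i ω, X i ω = 0 ∨ X i ω = 1) (i : ℕ) (ω : Ω) :
    |2 * X i ω - 1| = 1 := by
  rcases h01 i ω with h | h <;> norm_num [h]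

lemma abs_walk_le (h01 : ∀ i ω, X i ω = 0 ∨ X i ω = 1) (k : ℕ) (ω : Ω) : |walk X k ω| ≤ k := by
  calc |walk X k ω| ≤ ∑ i ∈ Finset.range k, |2 * X i ω - 1| := Finset.abs_sum_le_sum_abs _ _
    _ = k := by simp [abs_two_mul_sub_one h01]

lemma coinFiltration_mono : Monotone (coinFiltration X) := fun _ _ hjk =>
  biSup_mono fun _ hi => Finset.mem_range.2 ((Finset.mem_range.1 hi).trans_le hjk)

lemma measurable_coinFiltration {i k : ℕ} (h : i < k) : Measurable[coinFiltration X k] (X i) :=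
  measurable_iff_comap_le.2 <| le_iSup₂_of_le (f := fun i (_ : i ∈ Finset.range k) =>
    MeasurableSpace.comap (X i) inferInstance) i (Finset.mem_range.2 h) le_rfl

lemma measurable_walk_coinFiltration (k : ℕ) : Measurable[coinFiltration X k] (walk X k) :=
  Finset.measurable_sum _ fun _ hi =>
    ((measurable_coinFiltration (Finset.mem_range.1 hi)).const_mul 2).sub_const 1

lemma measurable_headsProp_coinFiltration (a n k : ℕ) :
    Measurable[coinFiltration X k] (headsProp X a n k) :=
  ((Finset.measurable_sum _ fun _ hi => measurable_coinFiltration (Finset.mem_range.1 hi))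
    |>.const_add _).div_const _

lemma abs_headsProp_le_one (h01 : ∀ i ω, X i ω = 0 ∨ X i ω = 1) {a n : ℕ} (han : a ≤ n)
    (k : ℕ) (ω : Ω) : |headsProp X a n k ω| ≤ 1 := by
  have hX0 : ∀ i, 0 ≤ X i ω := fun i => by rcases h01 i ω with h | h <;> simp [h]
  have hX1 : ∀ i, X i ω ≤ 1 := fun i => by rcases h01 i ω with h | h <;> simp [h]
  have hsum := Finset.sum_le_card_nsmul (Finset.range k) (fun i => X i ω) 1 fun i _ => hX1 i
  have hsum0 : 0 ≤ ∑ i ∈ Finset.range k, X i ω := Finset.sum_nonneg fun i _ => hX0 i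
  have : (a : ℝ) ≤ n := by exact_mod_cast han
  simp only [Finset.card_range, nsmul_eq_mul, mul_one] at hsum
  rw [headsProp, abs_of_nonneg (by positivity)]
  exact div_le_one_of_le₀ (by linarith) (by positivity)

lemma headsProp_sub_half {a n : ℕ} (hn : 0 < n) (k : ℕ) (ω : Ω) :
    headsProp X a n k ω - 1 / 2 = (2 * a - n + walk X k ω) / (2 * (n + k)) := by
  have : (0 : ℝ) < n + k := by positivity
  rw [headsProp, walk_eq]
  field_simp
  ring

lemma half_le_headsProp_iff {a n : ℕ} (hn : 0 < n) {k : ℕ} {ω : Ω} :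
    1 / 2 ≤ headsProp X a n k ω ↔ 0 ≤ 2 * a - n + walk X k ω := by
  rw [← sub_nonneg, headsProp_sub_half hn, le_div_iff₀ (by positivity), zero_mul]

lemma mul_headsProp_sub_half_le {a n a' n' : ℕ} (hn : 0 < n) (hle : n ≤ n')
    (hdiff : (2 * a - n : ℝ) = 2 * a' - n') {k : ℕ} {ω : Ω}
    (hhalf : 1 / 2 ≤ headsProp X a n k ω) :
    n * (headsProp X a n k ω - 1 / 2) ≤ n' * (headsProp X a' n' k ω - 1 / 2) := by
  have hn' : 0 < n' := hn.trans_le hle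
  have hc := (half_le_headsProp_iff hn).1 hhalf
  have hnn' : (n : ℝ) ≤ n' := by exact_mod_cast hle
  have hk : (0 : ℝ) ≤ k := k.cast_nonneg
  rw [headsProp_sub_half hn, headsProp_sub_half hn', ← hdiff, mul_div_assoc',
    mul_div_assoc', div_le_div_iff₀ (by positivity) (by positivity)]
  nlinarith [mul_nonneg (mul_nonneg hc hk) (sub_nonneg.2 hnn')]

lemma exists_half_le_headsProp (h01 : ∀ i ω, X i ω = 0 ∨ X i ω = 1) {a n : ℕ} (hn : 0 < n)
    {ω : Ω} (hω : ¬ BddAbove (range fun k => walk X k ω)) (i : ℕ) :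
    ∃ j, i ≤ j ∧ 1 / 2 ≤ headsProp X a n j ω := by
  obtain ⟨_, ⟨j, rfl⟩, hj⟩ := not_bddAbove_iff.1 hω (max i (n - 2 * a : ℝ))
  have hwalk := (le_abs_self _).trans (abs_walk_le h01 j ω)
  refine ⟨j, ?_, (half_le_headsProp_iff hn).2 ?_⟩
  · exact_mod_cast ((le_max_left _ _).trans_lt (hj.trans_le hwalk)).le
  · linarith [le_max_right (i : ℝ) (n - 2 * a : ℝ)]

variable (X) in
/-- The first time `k ≥ τ` with `R_k ≥ 1/2`, as a hitting time of the payoff process switched off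
(set to `0 < 1/2`) before `τ`. -/
noncomputable def continueUntilHalf (a n : ℕ) (τ : Ω → ℕ∞) : Ω → ℕ∞ :=
  hittingAfter (fun k => {ω | τ ω ≤ k}.indicator (headsProp X a n k)) (Ici (1 / 2)) 0

lemma le_continueUntilHalf_and_half_le {a n : ℕ} {τ : Ω → ℕ∞} {ω : Ω}
    (h : continueUntilHalf X a n τ ω ≠ ⊤) :
    τ ω ≤ continueUntilHalf X a n τ ω ∧
      1 / 2 ≤ headsProp X a n (continueUntilHalf X a n τ ω).toNat ω := by
  have hmem := hittingAfter_mem_set_of_ne_top h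
  simp only [continueUntilHalf] at h hmem ⊢
  generalize hittingAfter (ι := ℕ) _ _ _ ω = σ at h hmem ⊢
  lift σ to ℕ using h
  change 1 / 2 ≤ {ω' | τ ω' ≤ σ}.indicator (headsProp X a n σ) ω at hmem
  by_cases hτσ : τ ω ≤ σ
  · refine ⟨hτσ, ?_⟩
    change 1 / 2 ≤ headsProp X a n σ ω
    simpa [hτσ] using hmem
  · norm_num [hτσ] at hmem

lemma continueUntilHalf_le {a n : ℕ} {τ : Ω → ℕ∞} {ω : Ω} (hτ : τ ω ≠ ⊤)
    (h : 1 / 2 ≤ headsProp X a n (τ ω).toNat ω) : continueUntilHalf X a n τ ω ≤ τ ω := by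
  lift τ ω to ℕ using hτ with k hk
  exact hittingAfter_le_of_mem k.zero_le (by simpa [← hk] using h)

lemma headsProp_toNat_le_continueUntilHalf {a n : ℕ} {τ : Ω → ℕ∞} {ω : Ω} (hτ : τ ω ≠ ⊤)
    (h : continueUntilHalf X a n τ ω ≠ ⊤) :
    headsProp X a n (τ ω).toNat ω ≤ headsProp X a n (continueUntilHalf X a n τ ω).toNat ω := by
  obtain ⟨hle, hhalf⟩ := le_continueUntilHalf_and_half_le h
  by_cases hτhalf : 1 / 2 ≤ headsProp X a n (τ ω).toNat ω
  · rw [le_antisymm (continueUntilHalf_le hτ hτhalf) hle]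
  · exact (not_le.1 hτhalf).le.trans hhalf

lemma continueUntilHalf_ne_top (h01 : ∀ i ω, X i ω = 0 ∨ X i ω = 1) {a n : ℕ} (hn : 0 < n)
    {τ : Ω → ℕ∞} {ω : Ω} (hτ : τ ω ≠ ⊤) (hω : ¬ BddAbove (range fun k => walk X k ω)) :
    continueUntilHalf X a n τ ω ≠ ⊤ := by
  lift τ ω to ℕ using hτ with i hi
  obtain ⟨j, hij, hj⟩ := exists_half_le_headsProp h01 hn hω i
  refine ne_top_of_le_ne_top (ENat.natCast_ne_top j) (hittingAfter_le_of_mem j.zero_le ?_)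
  have : τ ω ≤ j := hi ▸ Nat.cast_le.2 hij
  simpa [this] using hj

end Pathwise

section Probability

variable {Ω : Type*} [mΩ : MeasurableSpace Ω] {μ : Measure Ω} {X : ℕ → Ω → ℝ}

lemma coinFiltration_le (hm : ∀ i, Measurable (X i)) (k : ℕ) : coinFiltration X k ≤ mΩ :=
  iSup₂_le fun i _ => (hm i).comap_le

variable (X) in
def filtration (hm : ∀ i, Measurable (X i)) : Filtration ℕ mΩ :=
  ⟨coinFiltration X, coinFiltration_mono, coinFiltration_le hm⟩

lemma indep_comap_coinFiltration (hm : ∀ i, Measurable (X i)) (hind : iIndepFun X μ) (k : ℕ) :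
    Indep (MeasurableSpace.comap (X k) inferInstance) (coinFiltration X k) μ := by
  have := indep_iSup_of_disjoint (fun i => (hm i).comap_le)
    ((iIndepFun_iff_iIndep _ _ _).1 hind) (S := {k}) (T := ↑(Finset.range k)) (by simp)
  simpa [coinFiltration] using this

lemma integral_two_mul_sub_one [IsProbabilityMeasure μ] (hX : IsFairCoinSeq μ X) (i : ℕ) :
    ∫ ω, (2 * X i ω - 1) ∂μ = 0 := by
  obtain ⟨hm, h01, hhalf, -⟩ := hX
  have hind : X i = {ω | X i ω = 1}.indicator 1 := by
    ext ω; rcases h01 i ω with h | h <;> simp [h]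
  have hs : MeasurableSet {ω | X i ω = 1} := hm i (measurableSet_singleton 1)
  have hint : Integrable (X i) μ := hind ▸ (integrable_const 1).indicator hs
  rw [integral_sub (hint.const_mul 2) (integrable_const 1), integral_const_mul, hind,
    integral_indicator_one hs, measureReal_def, hhalf]
  simp

lemma martingale_walk [IsProbabilityMeasure μ] (hX : IsFairCoinSeq μ X) :
    Martingale (walk X) (filtration X hX.1) μ := by
  have hstep : ∀ k, walk X (k + 1) - walk X k = fun ω => 2 * X k ω - 1 := fun k =>
    funext (walk_succ_sub k)
  refine martingale_of_condExp_sub_eq_zero_nat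
    (fun k => (measurable_walk_coinFiltration k).stronglyMeasurable) (fun k => ?_) fun k => ?_
  · exact Integrable.of_bound (Finset.measurable_sum _ fun i _ =>
      ((hX.1 i).const_mul 2).sub_const 1).aestronglyMeasurable k <|
      ae_of_all _ fun ω => abs_walk_le hX.2.1 k ω
  · rw [hstep]
    filter_upwards [condExp_indep_eq ((hX.1 k).comap_le) (coinFiltration_le hX.1 k)
      (((comap_measurable (X k)).const_mul 2).sub_const 1).stronglyMeasurable
      (indep_comap_coinFiltration hX.1 hX.2.2.2 k)] with ω hω
    rw [filtration, hω, integral_two_mul_sub_one hX]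
    rfl

lemma ae_not_bddAbove_walk [IsProbabilityMeasure μ] (hX : IsFairCoinSeq μ X) :
    ∀ᵐ ω ∂μ, ¬ BddAbove (range fun k => walk X k ω) := by
  filter_upwards [(martingale_walk hX).submartingale.bddAbove_iff_exists_tendsto (R := 1)
    (ae_of_all _ fun ω k => by rw [walk_succ_sub, abs_two_mul_sub_one hX.2.1]; rfl)]
    with ω hω hbdd
  obtain ⟨c, hc⟩ := hω.1 hbdd
  have h0 : Tendsto (fun k => walk X (k + 1) ω - walk X k ω) atTop (nhds 0) := by
    simpa using (hc.comp (tendsto_add_atTop_nat 1)).sub hc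
  obtain ⟨k, hk⟩ := Metric.tendsto_atTop.1 h0 1 one_pos
  have := hk k le_rfl
  rw [Real.dist_eq, sub_zero, walk_succ_sub, abs_two_mul_sub_one hX.2.1] at this
  exact lt_irrefl _ this

lemma _root_.IsAEFiniteStoppingTime.isStoppingTime (hm : ∀ i, Measurable (X i)) {τ : Ω → ℕ∞}
    (hτ : IsAEFiniteStoppingTime μ X τ) : IsStoppingTime (filtration X hm) τ :=
  hτ.1

lemma _root_.IsAEFiniteStoppingTime.ae_ne_top {τ : Ω → ℕ∞} (hτ : IsAEFiniteStoppingTime μ X τ) :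
    ∀ᵐ ω ∂μ, τ ω ≠ ⊤ :=
  ae_iff.2 (by simpa using hτ.2)

lemma isAEFiniteStoppingTime_zero : IsAEFiniteStoppingTime μ X 0 :=
  ⟨fun _ => by simp, by simp⟩

lemma isAEFiniteStoppingTime_continueUntilHalf [IsProbabilityMeasure μ] (hX : IsFairCoinSeq μ X)
    {a n : ℕ} (hn : 0 < n) {τ : Ω → ℕ∞} (hτ : IsAEFiniteStoppingTime μ X τ) :
    IsAEFiniteStoppingTime μ X (continueUntilHalf X a n τ) := by
  refine ⟨Adapted.isStoppingTime_hittingAfter (f := filtration X hX.1)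
    (fun k => (measurable_headsProp_coinFiltration a n k).indicator (hτ.1 k)) measurableSet_Ici, ?_⟩
  have : ∀ᵐ ω ∂μ, continueUntilHalf X a n τ ω ≠ ⊤ := by
    filter_upwards [hτ.ae_ne_top, ae_not_bddAbove_walk hX] with ω hτω hω
    exact continueUntilHalf_ne_top hX.2.1 hn hτω hω
  simpa using ae_iff.1 this

lemma integrable_headsProp_toNat [IsFiniteMeasure μ] (hX : IsFairCoinSeq μ X) {a n : ℕ}
    (han : a ≤ n) {τ : Ω → ℕ∞} (hτ : IsAEFiniteStoppingTime μ X τ) :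
    Integrable (fun ω => headsProp X a n (τ ω).toNat ω) μ := by
  have hG : Measurable fun p : Ω × ℕ => headsProp X a n p.2 p.1 :=
    measurable_from_prod_countable_left fun k =>
      (measurable_headsProp_coinFiltration a n k).mono (coinFiltration_le hX.1 k) le_rfl
  refine Integrable.of_bound (hG.comp (measurable_id.prodMk
    ((hτ.isStoppingTime hX.1).measurable'.untopD 0))).aestronglyMeasurable 1
    (ae_of_all _ fun ω => abs_headsProp_le_one hX.2.1 han _ ω)

lemma integral_le_gameValue [IsProbabilityMeasure μ] (h01 : ∀ i ω, X i ω = 0 ∨ X i ω = 1)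
    {a n : ℕ} (han : a ≤ n) {τ : Ω → ℕ∞} (hτ : IsAEFiniteStoppingTime μ X τ) :
    ∫ ω, headsProp X a n (τ ω).toNat ω ∂μ ≤ gameValue μ X a n := by
  refine le_ciSup (f := fun τ : {τ // IsAEFiniteStoppingTime μ X τ} =>
    ∫ ω, headsProp X a n (τ.1 ω).toNat ω ∂μ) ⟨1, ?_⟩ ⟨τ, hτ⟩
  rintro _ ⟨σ, rfl⟩
  have := norm_integral_le_of_norm_le_const (μ := μ)
    (f := fun ω => headsProp X a n (σ.1 ω).toNat ω)
    (ae_of_all _ fun ω => abs_headsProp_le_one h01 han (σ.1 ω).toNat ω)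
  rw [probReal_univ, mul_one] at this
  exact (le_abs_self _).trans this

lemma exists_lt_integral_of_lt_gameValue {a n : ℕ} {b : ℝ} (h : b < gameValue μ X a n) :
    ∃ τ, IsAEFiniteStoppingTime μ X τ ∧ b < ∫ ω, headsProp X a n (τ ω).toNat ω ∂μ := by
  have : Nonempty {τ // IsAEFiniteStoppingTime μ X τ} := ⟨⟨0, isAEFiniteStoppingTime_zero⟩⟩
  obtain ⟨⟨τ, hτ⟩, hlt⟩ := exists_lt_of_lt_ciSup h
  exact ⟨τ, hτ, hlt⟩

lemma integral_headsProp_le_continueUntilHalf [IsProbabilityMeasure μ] (hX : IsFairCoinSeq μ X)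
    {a n : ℕ} (hn : 0 < n) (han : a ≤ n) {τ : Ω → ℕ∞} (hτ : IsAEFiniteStoppingTime μ X τ) :
    ∫ ω, headsProp X a n (τ ω).toNat ω ∂μ ≤
      ∫ ω, headsProp X a n (continueUntilHalf X a n τ ω).toNat ω ∂μ := by
  have hσ := isAEFiniteStoppingTime_continueUntilHalf (a := a) hX hn hτ
  refine integral_mono_ae (integrable_headsProp_toNat hX han hτ)
    (integrable_headsProp_toNat hX han hσ) ?_
  filter_upwards [hτ.ae_ne_top, hσ.ae_ne_top] with ω hτω hσω
  exact headsProp_toNat_le_continueUntilHalf hτω hσω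

lemma mul_integral_headsProp_sub_half_le [IsProbabilityMeasure μ] (hX : IsFairCoinSeq μ X)
    {a n a' n' : ℕ} (hn : 0 < n) (han : a ≤ n) (han' : a' ≤ n') (hle : n ≤ n')
    (hdiff : (2 * a - n : ℝ) = 2 * a' - n') {τ : Ω → ℕ∞} (hτ : IsAEFiniteStoppingTime μ X τ) :
    n * (∫ ω, headsProp X a n (continueUntilHalf X a n τ ω).toNat ω ∂μ - 1 / 2) ≤
      n' * (∫ ω, headsProp X a' n' (continueUntilHalf X a n τ ω).toNat ω ∂μ - 1 / 2) := by
  have hσ := isAEFiniteStoppingTime_continueUntilHalf (a := a) hX hn hτ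
  have hint := integrable_headsProp_toNat hX han hσ
  have hint' := integrable_headsProp_toNat hX han' hσ
  have key := integral_mono_ae ((hint.sub (integrable_const (1 / 2 : ℝ))).const_mul n)
    ((hint'.sub (integrable_const (1 / 2 : ℝ))).const_mul n') <| by
      filter_upwards [hσ.ae_ne_top] with ω hω
      exact mul_headsProp_sub_half_le hn hle hdiff (le_continueUntilHalf_and_half_le hω).2
  simpa [integral_const_mul, integral_sub hint (integrable_const _),
    integral_sub hint' (integrable_const _)] using key

end Probability

end FairCoin

open FairCoin

/-- At fixed difference (heads minus tails), "continuing is strictly better than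
stopping" is upward-closed in the number of flips. -/
theorem continue_upward_closed {Ω : Type*} [MeasurableSpace Ω] (μ : Measure Ω)
    [IsProbabilityMeasure μ] (X : ℕ → Ω → ℝ) (hX : IsFairCoinSeq μ X)
    (a n a' n' : ℕ) (hn : 1 ≤ n) (han : a ≤ n) (hn' : 1 ≤ n') (han' : a' ≤ n')
    (hdiff : 2 * (a : ℤ) - n = 2 * (a' : ℤ) - n') (hle : n ≤ n')
    (h : (a : ℝ) / n < gameValue μ X a n) :
    (a' : ℝ) / n' < gameValue μ X a' n' := by
  obtain ⟨τ, hτ, hτ_lt⟩ := exists_lt_integral_of_lt_gameValue h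
  have hdiff' : (2 * a - n : ℝ) = 2 * a' - n' := by exact_mod_cast hdiff
  have hτσ := integral_headsProp_le_continueUntilHalf hX hn han hτ
  have hσ := mul_integral_headsProp_sub_half_le hX hn han han' hle hdiff' hτ
  have hV := integral_le_gameValue hX.2.1 han'
    (isAEFiniteStoppingTime_continueUntilHalf (a := a) hX hn hτ)
  rw [div_lt_iff₀ (by positivity)] at hτ_lt ⊢
  nlinarith
end
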